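/- arXiv:2604.03054 — 6 statements merged into one kernel-verified Lean document; each statement's English description precedes it below -/
import Mathlib

section
/- (Second Lemoine Circle) The six points obtained by intersecting the lines through L antiparallel to BC, CA, AB (with respect to the corresponding angles of the triangle) with the side lines lie on a common circle centered at L; equivalently, L is equidistant from all six points. -/
open EuclideanGeometry RealInnerProductSpace

noncomputable section

abbrev Pt := EuclideanSpace ℝ (Fin 2)

/-- The Lemoine (symmedian) point of a triangle, with barycentric
coordinates `(a², b², c²)`. -/
noncomputable def lemoinePoint (A B C : Pt) : Pt :=
  ((dist B C) ^ 2 / ((dist B C) ^ 2 + (dist C A) ^ 2 + (dist A B) ^ 2)) • A +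
  ((dist C A) ^ 2 / ((dist B C) ^ 2 + (dist C A) ^ 2 + (dist A B) ^ 2)) • B +
  ((dist A B) ^ 2 / ((dist B C) ^ 2 + (dist C A) ^ 2 + (dist A B) ^ 2)) • C

/-- Two circles are tangent at `x`: both pass through `x` and their centers
are collinear with `x` (hence they share the tangent line at `x`). -/
def CircleTangentAt (s t : EuclideanGeometry.Sphere Pt) (x : Pt) : Prop :=
  x ∈ s ∧ x ∈ t ∧ Collinear ℝ ({s.center, t.center, x} : Set Pt)

/-- The power of a point with respect to a circle. -/
noncomputable def circlePower (p : Pt) (s : EuclideanGeometry.Sphere Pt) : ℝ :=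
  dist p s.center ^ 2 - s.radius ^ 2

lemma lemoine_swap23 (A B C : Pt) : lemoinePoint A C B = lemoinePoint A B C := by
  simp only [lemoinePoint]
  rw [dist_comm C B, dist_comm B A, dist_comm A C]
  match_scalars <;> ring

lemma lemoine_cyc (A B C : Pt) : lemoinePoint B C A = lemoinePoint A B C := by
  simp only [lemoinePoint]
  rw [dist_comm C A, dist_comm A B, dist_comm B C]
  match_scalars <;> ring

/-- Main computation: the distance from the Lemoine point to the intersection of the
antiparallel to `BC` through it with the line `AB` equals `abc / (a² + b² + c²)`. -/
lemma lemoine_key (ω : EuclideanGeometry.Sphere Pt) (A B C : Pt)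
    (hA : A ∈ ω) (hB : B ∈ ω) (hC : C ∈ ω) (hAB : A ≠ B) (Q : Pt)
    (hQl : Q ∈ affineSpan ℝ ({A, B} : Set Pt))
    (hQa : ⟪Q - lemoinePoint A B C, A - ω.center⟫ = 0) :
    dist Q (lemoinePoint A B C) ^ 2 =
      (dist B C * dist C A * dist A B) ^ 2 /
        ((dist B C) ^ 2 + (dist C A) ^ 2 + (dist A B) ^ 2) ^ 2 := by
  have hQ' : (Q - A) +ᵥ A ∈ line[ℝ, A, B] := by simpa using hQl
  obtain ⟨t, htQ⟩ := vadd_left_mem_affineSpan_pair.1 hQ'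
  rw [vsub_eq_sub] at htQ
  have htQ' : Q = t • (B - A) + A := by rw [htQ]; abel
  set O := ω.center with hO
  set a2 := dist B C ^ 2 with ha2
  set b2 := dist C A ^ 2 with hb2
  set c2 := dist A B ^ 2 with hc2
  have hc2pos : 0 < c2 := by
    rw [hc2]; have := dist_pos.2 hAB; positivity
  have ha2nn : 0 ≤ a2 := by rw [ha2]; positivity
  have hb2nn : 0 ≤ b2 := by rw [hb2]; positivity
  have hspos : 0 < a2 + b2 + c2 := by linarith
  have hsne : a2 + b2 + c2 ≠ 0 := ne_of_gt hspos
  set R2 := ω.radius ^ 2 with hR2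
  have huu : ⟪A - O, A - O⟫ = R2 := by
    rw [real_inner_self_eq_norm_sq, ← dist_eq_norm, mem_sphere.1 hA, hR2]
  have hvv : ⟪B - O, B - O⟫ = R2 := by
    rw [real_inner_self_eq_norm_sq, ← dist_eq_norm, mem_sphere.1 hB, hR2]
  have hww : ⟪C - O, C - O⟫ = R2 := by
    rw [real_inner_self_eq_norm_sq, ← dist_eq_norm, mem_sphere.1 hC, hR2]
  have hkey : ∀ X Y : Pt, X ∈ ω → Y ∈ ω → ⟪X - O, Y - O⟫ = R2 - dist X Y ^ 2 / 2 := by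
    intro X Y hX hY
    have h1 : ‖(X - O) - (Y - O)‖ ^ 2 = ‖X - O‖ ^ 2 - 2 * ⟪X - O, Y - O⟫ + ‖Y - O‖ ^ 2 :=
      norm_sub_sq_real _ _
    have h2 : (X - O) - (Y - O) = X - Y := by abel
    rw [h2, ← dist_eq_norm, ← dist_eq_norm, ← dist_eq_norm, mem_sphere.1 hX, mem_sphere.1 hY] at h1
    rw [← hR2] at h1
    linarith
  have huv : ⟪A - O, B - O⟫ = R2 - c2 / 2 := by rw [hkey A B hA hB, hc2]
  have hvu : ⟪B - O, A - O⟫ = R2 - c2 / 2 := by rw [real_inner_comm]; exact huv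
  have huw : ⟪A - O, C - O⟫ = R2 - b2 / 2 := by
    rw [hkey A C hA hC, hb2, dist_comm]
  have hwu : ⟪C - O, A - O⟫ = R2 - b2 / 2 := by rw [real_inner_comm]; exact huw
  have hvw : ⟪B - O, C - O⟫ = R2 - a2 / 2 := by rw [hkey B C hB hC, ha2]
  have hwv : ⟪C - O, B - O⟫ = R2 - a2 / 2 := by rw [real_inner_comm]; exact hvw
  have hQL : (a2 + b2 + c2) • (Q - lemoinePoint A B C) =
      (a2 + b2 + c2 - a2 - (a2 + b2 + c2) * t) • (A - O) +
      ((a2 + b2 + c2) * t - b2) • (B - O) + (-c2) • (C - O) := by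
    rw [htQ', lemoinePoint, ← ha2, ← hb2, ← hc2]
    match_scalars <;> field_simp <;> ring
  have hQa2 : (a2 + b2 + c2 - a2 - (a2 + b2 + c2) * t) * R2 +
      ((a2 + b2 + c2) * t - b2) * (R2 - c2 / 2) + (-c2) * (R2 - b2 / 2) = 0 := by
    have h := congrArg (fun v => ⟪v, A - O⟫) hQL
    simp only [inner_add_left, real_inner_smul_left, huu, hvu, hwu] at h
    rw [← h, hQa, mul_zero]
  have h4 : (a2 + b2 + c2) * t = 2 * b2 := by
    have h3 : c2 * ((a2 + b2 + c2) * t - 2 * b2) = 0 := by linear_combination -2 * hQa2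
    rcases mul_eq_zero.1 h3 with h | h
    · exact absurd h (ne_of_gt hc2pos)
    · linarith
  have h5 : (a2 + b2 + c2) ^ 2 * dist Q (lemoinePoint A B C) ^ 2 = a2 * b2 * c2 := by
    have h6 : ⟪(a2 + b2 + c2) • (Q - lemoinePoint A B C),
        (a2 + b2 + c2) • (Q - lemoinePoint A B C)⟫ =
        (a2 + b2 + c2) ^ 2 * dist Q (lemoinePoint A B C) ^ 2 := by
      rw [real_inner_smul_left, real_inner_smul_right, real_inner_self_eq_norm_sq,
        ← dist_eq_norm]
      ring
    rw [hQL] at h6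
    simp only [inner_add_left, inner_add_right, real_inner_smul_left, real_inner_smul_right,
      huu, hvv, hww, huv, hvu, huw, hwu, hvw, hwv] at h6
    rw [← h6]
    linear_combination (c2 * ((a2 + b2 + c2) * t + a2 - b2 - c2)) * h4
  rw [ha2, hb2, hc2] at h5 hsne ⊢
  field_simp
  linear_combination h5

theorem stmt11    (A B C : Pt) (hABC : AffineIndependent ℝ ![A, B, C])
    (ω : EuclideanGeometry.Sphere Pt) (hr : 0 < ω.radius)
    (hA : A ∈ ω) (hB : B ∈ ω) (hC : C ∈ ω)
    (L : Pt) (hL : L = lemoinePoint A B C)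
    (Qa₁ Qa₂ Qb₁ Qb₂ Qc₁ Qc₂ : Pt)
    (hQa₁l : Qa₁ ∈ affineSpan ℝ ({A, B} : Set Pt)) (hQa₁a : ⟪Qa₁ - L, A - ω.center⟫ = 0)
    (hQa₂l : Qa₂ ∈ affineSpan ℝ ({A, C} : Set Pt)) (hQa₂a : ⟪Qa₂ - L, A - ω.center⟫ = 0)
    (hQb₁l : Qb₁ ∈ affineSpan ℝ ({B, C} : Set Pt)) (hQb₁a : ⟪Qb₁ - L, B - ω.center⟫ = 0)
    (hQb₂l : Qb₂ ∈ affineSpan ℝ ({B, A} : Set Pt)) (hQb₂a : ⟪Qb₂ - L, B - ω.center⟫ = 0)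
    (hQc₁l : Qc₁ ∈ affineSpan ℝ ({C, A} : Set Pt)) (hQc₁a : ⟪Qc₁ - L, C - ω.center⟫ = 0)
    (hQc₂l : Qc₂ ∈ affineSpan ℝ ({C, B} : Set Pt)) (hQc₂a : ⟪Qc₂ - L, C - ω.center⟫ = 0) :
    ∃ s : EuclideanGeometry.Sphere Pt, s.center = L ∧
      (Qa₁ ∈ s ∧ Qa₂ ∈ s ∧ Qb₁ ∈ s ∧ Qb₂ ∈ s ∧ Qc₁ ∈ s ∧ Qc₂ ∈ s) := by
  have hAB : A ≠ B := by
    intro h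
    have := hABC.injective (a₁ := 0) (a₂ := 1) (by simpa using h)
    simp at this
  have hBC : B ≠ C := by
    intro h
    have := hABC.injective (a₁ := 1) (a₂ := 2) (by simpa using h)
    simp at this
  have hCA : C ≠ A := by
    intro h
    have := hABC.injective (a₁ := 2) (a₂ := 0) (by simpa using h)
    simp at this
  -- identities between the various Lemoine points
  have eACB : lemoinePoint A C B = L := by rw [lemoine_swap23 A B C]; exact hL.symm
  have eBCA : lemoinePoint B C A = L := by rw [lemoine_cyc A B C]; exact hL.symm
  have eBAC : lemoinePoint B A C = L := by
    rw [lemoine_swap23 B C A, lemoine_cyc A B C]; exact hL.symm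
  have eCAB : lemoinePoint C A B = L := by rw [← lemoine_cyc C A B]; exact hL.symm
  have eCBA : lemoinePoint C B A = L := by
    rw [lemoine_swap23 C A B, ← lemoine_cyc C A B]; exact hL.symm
  have eABC : lemoinePoint A B C = L := hL.symm
  -- the six squared distances
  have k1 := lemoine_key ω A B C hA hB hC hAB Qa₁ hQa₁l (by rw [eABC]; exact hQa₁a)
  rw [eABC] at k1
  have k2 := lemoine_key ω A C B hA hC hB (Ne.symm hCA) Qa₂ hQa₂l (by rw [eACB]; exact hQa₂a)
  rw [eACB] at k2
  have k3 := lemoine_key ω B C A hB hC hA hBC Qb₁ hQb₁l (by rw [eBCA]; exact hQb₁a)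
  rw [eBCA] at k3
  have k4 := lemoine_key ω B A C hB hA hC (Ne.symm hAB) Qb₂ hQb₂l (by rw [eBAC]; exact hQb₂a)
  rw [eBAC] at k4
  have k5 := lemoine_key ω C A B hC hA hB hCA Qc₁ hQc₁l (by rw [eCAB]; exact hQc₁a)
  rw [eCAB] at k5
  have k6 := lemoine_key ω C B A hC hB hA (Ne.symm hBC) Qc₂ hQc₂l (by rw [eCBA]; exact hQc₂a)
  rw [eCBA] at k6
  -- all six squared distances coincide
  have deq : ∀ x y : Pt, dist x L ^ 2 = dist y L ^ 2 → dist x L = dist y L := by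
    intro x y h
    have := congrArg Real.sqrt h
    rwa [Real.sqrt_sq dist_nonneg, Real.sqrt_sq dist_nonneg] at this
  refine ⟨⟨L, dist Qa₁ L⟩, rfl, ?_, ?_, ?_, ?_, ?_, ?_⟩ <;>
    rw [EuclideanGeometry.mem_sphere] <;> dsimp only
  · refine deq _ _ ?_
    rw [k1, k2, dist_comm C B, dist_comm B A, dist_comm A C]; ring
  · refine deq _ _ ?_
    rw [k1, k3, dist_comm C A, dist_comm A B, dist_comm B C]; ring
  · refine deq _ _ ?_
    rw [k1, k4, dist_comm A C, dist_comm C B, dist_comm B A]; ring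
  · refine deq _ _ ?_
    rw [k1, k5, dist_comm A B, dist_comm B C, dist_comm C A]; ring
  · refine deq _ _ ?_
    rw [k1, k6, dist_comm B A, dist_comm A C, dist_comm C B]; ring
end
end

section
/- (Third Lemoine Circle) Let the circumcircle of BLC meet lines AB, AC again at A_b, A_c; the circumcircle of CLA meet lines BC, BA again at B_c, B_a; and the circumcircle of ALB meet lines CA, CB again at C_a, C_b. Then these six points are concyclic, and the center M of their circle satisfies M - L = -(1/2)(O - L) as vectors. -/
open EuclideanGeometry RealInnerProductSpace

noncomputable section

/- ### Auxiliary machinery -/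

lemma tlc_dsq (X Y : Pt) : dist X Y ^ 2 = (X 0 - Y 0)^2 + (X 1 - Y 1)^2 := by
  have h : dist X Y = Real.sqrt ((X 0 - Y 0)^2 + (X 1 - Y 1)^2) := by
    rw [EuclideanSpace.dist_eq]; congr 1
    simp [Fin.sum_univ_two, Real.dist_eq, sq_abs]
  rw [h, Real.sq_sqrt (by positivity)]

noncomputable def nsq (X Y : Pt) : ℝ := (Y 0 - X 0)^2 + (Y 1 - X 1)^2

noncomputable def ipd (X Y Z : Pt) : ℝ :=
  (Y 0 - X 0)*(Z 0 - X 0) + (Y 1 - X 1)*(Z 1 - X 1)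

noncomputable def trel (a b c t : ℝ) : ℝ :=
  2*(a+c-b)*((a-2*b+c)*(t+1) + (a-c)) - (2*(a+c-b))^2 + c^2 + 2*b*c + a*c

lemma nsq_pos {X Y : Pt} (h : X ≠ Y) : 0 < nsq X Y := by
  have hd : dist Y X ≠ 0 := dist_ne_zero.mpr (fun hh => h hh.symm)
  have h2 : dist Y X ^ 2 = nsq X Y := by rw [tlc_dsq]; unfold nsq; ring
  have h0 : 0 ≤ nsq X Y := by unfold nsq; positivity
  rcases h0.lt_or_eq with hlt | heq
  · exact hlt
  · exfalso; apply hd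
    have h3 : dist Y X ^ 2 = 0 := by rw [h2, ← heq]
    exact pow_eq_zero_iff (by norm_num : (2:ℕ) ≠ 0) |>.mp h3

lemma tlc_line {A B X : Pt} (hX : X ∈ affineSpan ℝ ({A, B} : Set Pt)) :
    ∃ t : ℝ, X = t • (B - A) + A := by
  have h2 : (X - A) +ᵥ A ∈ line[ℝ, A, B] := by
    have e : (X - A) +ᵥ A = X := by rw [vadd_eq_add]; abel
    rw [e]; exact hX
  obtain ⟨r, hr⟩ := vadd_left_mem_affineSpan_pair.mp h2
  rw [vsub_eq_sub] at hr
  exact ⟨r, by rw [hr]; abel⟩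

lemma tEqA {a b c pu pv t : ℝ} (ht : t ≠ 1) (ha : a ≠ 0)
    (he1 : (t - 1) * ((t + 1) * a - 2 * pu) = 0)
    (he2 : a - c - 2 * pu + 2 * pv = 0)
    (he3 : (2*(a+c-b))^2 * a - (c^2*a + 2*a*b*c + a^2*c)
      - 2*(2*(a+c-b))^2 * pu + 2*(2*(a+c-b))*(c*pu + a*pv) = 0) :
    trel a b c t = 0 := by
  have he1' : (t + 1) * a - 2 * pu = 0 := by
    rcases mul_eq_zero.mp he1 with h | h
    · exact absurd (by linarith : t = 1) ht
    · exact h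
  have key : a * trel a b c t = 0 := by
    unfold trel
    linear_combination ((2*(a+c-b))^2 - (2*(a+c-b))*c - (2*(a+c-b))*a) * he1'
      + (2*(a+c-b))*a * he2 - he3
  rcases mul_eq_zero.mp key with h | h
  · exact absurd h ha
  · exact h

lemma tEqG (X Y Z L P W : Pt) (t : ℝ)
    (hW : W = t • (Y - X) + X) (hne : W ≠ Y) (hXY : X ≠ Y)
    (h1 : dist W P = dist Y P) (h2 : dist Y P = dist Z P) (h3 : dist Y P = dist L P)
    (hL0 : (nsq Y Z + nsq X Z + nsq X Y) * L 0
      = nsq Y Z * X 0 + nsq X Z * Y 0 + nsq X Y * Z 0)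
    (hL1 : (nsq Y Z + nsq X Z + nsq X Y) * L 1
      = nsq Y Z * X 1 + nsq X Z * Y 1 + nsq X Y * Z 1) :
    trel (nsq X Y) (ipd X Y Z) (nsq X Z) t = 0 := by
  have ht : t ≠ 1 := by
    intro h; apply hne; rw [hW, h, one_smul]; abel
  have ha : nsq X Y ≠ 0 := (nsq_pos hXY).ne'
  have hw0 : W 0 = t * (Y 0 - X 0) + X 0 := by
    rw [hW]; simp [PiLp.add_apply, PiLp.smul_apply, PiLp.sub_apply]
  have hw1 : W 1 = t * (Y 1 - X 1) + X 1 := by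
    rw [hW]; simp [PiLp.add_apply, PiLp.smul_apply, PiLp.sub_apply]
  have h1sq : dist W P ^ 2 = dist Y P ^ 2 := by rw [h1]
  have h2sq : dist Y P ^ 2 = dist Z P ^ 2 := by rw [h2]
  have h3sq : dist Y P ^ 2 = dist L P ^ 2 := by rw [h3]
  rw [tlc_dsq, tlc_dsq] at h1sq h2sq h3sq
  rw [hw0, hw1] at h1sq
  have he1 : (t - 1) * ((t + 1) * nsq X Y - 2 * ipd X Y P) = 0 := by
    unfold nsq ipd; linear_combination h1sq
  have he2 : nsq X Y - nsq X Z - 2 * ipd X Y P + 2 * ipd X Z P = 0 := by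
    unfold nsq ipd; linear_combination h2sq
  have he3 : (2*(nsq X Y + nsq X Z - ipd X Y Z))^2 * nsq X Y
      - ((nsq X Z)^2*(nsq X Y) + 2*(nsq X Y)*(ipd X Y Z)*(nsq X Z) + (nsq X Y)^2*(nsq X Z))
      - 2*(2*(nsq X Y + nsq X Z - ipd X Y Z))^2 * ipd X Y P
      + 2*(2*(nsq X Y + nsq X Z - ipd X Y Z))*((nsq X Z) * ipd X Y P + (nsq X Y) * ipd X Z P)
      = 0 := by
    simp only [nsq, ipd] at hL0 hL1 ⊢
    linear_combination
      (2*(((Y 0 - X 0)^2 + (Y 1 - X 1)^2) + ((Z 0 - X 0)^2 + (Z 1 - X 1)^2)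
        - ((Y 0 - X 0)*(Z 0 - X 0) + (Y 1 - X 1)*(Z 1 - X 1))))^2 * h3sq
      + ((2*(((Y 0 - X 0)^2 + (Y 1 - X 1)^2) + ((Z 0 - X 0)^2 + (Z 1 - X 1)^2)
          - ((Y 0 - X 0)*(Z 0 - X 0) + (Y 1 - X 1)*(Z 1 - X 1))))*(L 0 - X 0)
        + ((Z 0 - X 0)^2 + (Z 1 - X 1)^2)*(Y 0 - X 0)
        + ((Y 0 - X 0)^2 + (Y 1 - X 1)^2)*(Z 0 - X 0)
        - 2*(2*(((Y 0 - X 0)^2 + (Y 1 - X 1)^2) + ((Z 0 - X 0)^2 + (Z 1 - X 1)^2)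
          - ((Y 0 - X 0)*(Z 0 - X 0) + (Y 1 - X 1)*(Z 1 - X 1))))*(P 0 - X 0)) * hL0
      + ((2*(((Y 0 - X 0)^2 + (Y 1 - X 1)^2) + ((Z 0 - X 0)^2 + (Z 1 - X 1)^2)
          - ((Y 0 - X 0)*(Z 0 - X 0) + (Y 1 - X 1)*(Z 1 - X 1))))*(L 1 - X 1)
        + ((Z 0 - X 0)^2 + (Z 1 - X 1)^2)*(Y 1 - X 1)
        + ((Y 0 - X 0)^2 + (Y 1 - X 1)^2)*(Z 1 - X 1)
        - 2*(2*(((Y 0 - X 0)^2 + (Y 1 - X 1)^2) + ((Z 0 - X 0)^2 + (Z 1 - X 1)^2)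
          - ((Y 0 - X 0)*(Z 0 - X 0) + (Y 1 - X 1)*(Z 1 - X 1))))*(P 1 - X 1)) * hL1
  exact tEqA (b := ipd X Y Z) ht ha he1 he2 he3

lemma shape1A {a b c lu lv ou ov t1 t2 : ℝ}
    (hq : 2*(a+c-b) ≠ 0) (hd : a-2*b+c ≠ 0)
    (hT1 : trel a b c t1 = 0) (hT2 : trel c b a t2 = 0)
    (hou : 2*ou - a = 0) (hov : 2*ov - c = 0)
    (hlu : 2*(a+c-b)*lu - (c*a+a*b) = 0) (hlv : 2*(a+c-b)*lv - (c*b+a*c) = 0) :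
    t1^2*a - 3*t1*lu + t1*ou = t2^2*c - 3*t2*lv + t2*ov := by
  have H : (2*(a+c-b))^3*(a-2*b+c)^2
      * ((t1^2*a - 3*t1*lu + t1*ou) - (t2^2*c - 3*t2*lv + t2*ov)) = 0 := by
    unfold trel at hT1 hT2
    linear_combination (4*c^5*t1 + -28*b*c^4*t1 + 76*b^2*c^3*t1 + -100*b^3*c^2*t1 + 64*b^4*c*t1 + -16*b^5*t1 + 20*a*c^4*t1 + -112*a*b*c^3*t1 + 228*a*b^2*c^2*t1 + -200*a*b^3*c*t1 + 64*a*b^4*t1 + 40*a^2*c^3*t1 + -168*a^2*b*c^2*t1 + 228*a^2*b^2*c*t1 + -100*a^2*b^3*t1 + 40*a^3*c^2*t1 + -112*a^3*b*c*t1 + 76*a^3*b^2*t1 + 20*a^4*c*t1 + -28*a^4*b*t1 + 4*a^5*t1) * hou + (-4*c^5*t2 + 28*b*c^4*t2 + -76*b^2*c^3*t2 + 100*b^3*c^2*t2 + -64*b^4*c*t2 + 16*b^5*t2 + -20*a*c^4*t2 + 112*a*b*c^3*t2 + -228*a*b^2*c^2*t2 + 200*a*b^3*c*t2 + -64*a*b^4*t2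 + -40*a^2*c^3*t2 + 168*a^2*b*c^2*t2 + -228*a^2*b^2*c*t2 + 100*a^2*b^3*t2 + -40*a^3*c^2*t2 + 112*a^3*b*c*t2 + -76*a^3*b^2*t2 + -20*a^4*c*t2 + 28*a^4*b*t2 + -4*a^5*t2) * hov + (-12*c^4*t1 + 72*b*c^3*t1 + -156*b^2*c^2*t1 + 144*b^3*c*t1 + -48*b^4*t1 + -48*a*c^3*t1 + 216*a*b*c^2*t1 + -312*a*b^2*c*t1 + 144*a*b^3*t1 + -72*a^2*c^2*t1 + 216*a^2*b*c*t1 + -156*a^2*b^2*t1 + -48*a^3*c*t1 + 72*a^3*b*t1 + -12*a^4*t1) * hlu + (12*c^4*t2 + -72*b*c^3*t2 + 156*b^2*c^2*t2 + -144*b^3*c*t2 + 48*b^4*t2 + 48*a*c^3*t2 + -216*a*b*c^2*t2 + 312*a*b^2*c*t2 + -144*a*b^3*t2 + 72*a^2*c^2*t2 + -216*a^2*b*c*t2 + 156*a^2*b^2*t2 + 48*a^3*c*t2 + -72*a^3*b*t2 + 12*a^4*t2) * hlv + (2*a*c^3 + 4*a*c^3*t1 + -14*a*b*c^2 + -16*a*b*c^2*t1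 + 28*a*b^2*c + 20*a*b^2*c*t1 + -16*a*b^3 + -8*a*b^3*t1 + 6*a^2*c^2 + 12*a^2*c^2*t1 + -28*a^2*b*c + -32*a^2*b*c*t1 + 28*a^2*b^2 + 20*a^2*b^2*t1 + 6*a^3*c + 12*a^3*c*t1 + -14*a^3*b + -16*a^3*b*t1 + 2*a^4 + 4*a^4*t1) * hT1 + (-2*c^4 + -4*c^4*t2 + 14*b*c^3 + 16*b*c^3*t2 + -28*b^2*c^2 + -20*b^2*c^2*t2 + 16*b^3*c + 8*b^3*c*t2 + -6*a*c^3 + -12*a*c^3*t2 + 28*a*b*c^2 + 32*a*b*c^2*t2 + -28*a*b^2*c + -20*a*b^2*c*t2 + -6*a^2*c^2 + -12*a^2*c^2*t2 + 14*a^2*b*c + 16*a^2*b*c*t2 + -2*a^3*c + -4*a^3*c*t2) * hT2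
  have hM : (2*(a+c-b))^3*(a-2*b+c)^2 ≠ 0 :=
    mul_ne_zero (pow_ne_zero _ hq) (pow_ne_zero _ hd)
  have h2 := (mul_eq_zero.mp H).resolve_left hM
  linarith

lemma shape2A {a b c lu ou t1 t2 : ℝ}
    (hq : 2*(a+c-b) ≠ 0) (hd : a-2*b+c ≠ 0) (hc : c ≠ 0)
    (hT1 : trel a b c t1 = 0) (hT2 : trel a (a-b) (a-2*b+c) t2 = 0)
    (hou : 2*ou - a = 0)
    (hlu : 2*(a+c-b)*lu - (c*a+a*b) = 0) :
    t1^2*a - 3*t1*lu + t1*ou = (1-t2)^2*a - 3*(1-t2)*lu + (1-t2)*ou := by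
  have H : (2*(a+c-b))^3*(a-2*b+c)^2*c^2
      * ((t1^2*a - 3*t1*lu + t1*ou) - ((1-t2)^2*a - 3*(1-t2)*lu + (1-t2)*ou)) = 0 := by
    unfold trel at hT1 hT2
    linear_combination (-4*c^7 + 4*c^7*t2 + 4*c^7*t1 + 28*b*c^6 + -28*b*c^6*t2 + -28*b*c^6*t1 + -76*b^2*c^5 + 76*b^2*c^5*t2 + 76*b^2*c^5*t1 + 100*b^3*c^4 + -100*b^3*c^4*t2 + -100*b^3*c^4*t1 + -64*b^4*c^3 + 64*b^4*c^3*t2 + 64*b^4*c^3*t1 + 16*b^5*c^2 + -16*b^5*c^2*t2 + -16*b^5*c^2*t1 + -20*a*c^6 + 20*a*c^6*t2 + 20*a*c^6*t1 + 112*a*b*c^5 + -112*a*b*c^5*t2 + -112*a*b*c^5*t1 + -228*a*b^2*c^4 + 228*a*b^2*c^4*t2 + 228*a*b^2*c^4*t1 + 200*a*b^3*c^3 + -200*a*b^3*c^3*t2 + -200*a*b^3*c^3*t1 + -64*a*b^4*c^2 + 64*a*b^4*c^2*t2 + 64*a*b^4*c^2*t1 + -40*a^2*c^5 + 40*a^2*c^5*t2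 + 40*a^2*c^5*t1 + 168*a^2*b*c^4 + -168*a^2*b*c^4*t2 + -168*a^2*b*c^4*t1 + -228*a^2*b^2*c^3 + 228*a^2*b^2*c^3*t2 + 228*a^2*b^2*c^3*t1 + 100*a^2*b^3*c^2 + -100*a^2*b^3*c^2*t2 + -100*a^2*b^3*c^2*t1 + -40*a^3*c^4 + 40*a^3*c^4*t2 + 40*a^3*c^4*t1 + 112*a^3*b*c^3 + -112*a^3*b*c^3*t2 + -112*a^3*b*c^3*t1 + -76*a^3*b^2*c^2 + 76*a^3*b^2*c^2*t2 + 76*a^3*b^2*c^2*t1 + -20*a^4*c^3 + 20*a^4*c^3*t2 + 20*a^4*c^3*t1 + 28*a^4*b*c^2 + -28*a^4*b*c^2*t2 + -28*a^4*b*c^2*t1 + -4*a^5*c^2 + 4*a^5*c^2*t2 + 4*a^5*c^2*t1) * hou + (12*c^6 + -12*c^6*t2 + -12*c^6*t1 + -72*b*c^5 + 72*b*c^5*t2 + 72*b*c^5*t1 + 156*b^2*c^4 + -156*b^2*c^4*t2 + -156*b^2*c^4*t1 + -144*b^3*c^3 + 144*b^3*c^3*t2 + 144*b^3*c^3*t1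 + 48*b^4*c^2 + -48*b^4*c^2*t2 + -48*b^4*c^2*t1 + 48*a*c^5 + -48*a*c^5*t2 + -48*a*c^5*t1 + -216*a*b*c^4 + 216*a*b*c^4*t2 + 216*a*b*c^4*t1 + 312*a*b^2*c^3 + -312*a*b^2*c^3*t2 + -312*a*b^2*c^3*t1 + -144*a*b^3*c^2 + 144*a*b^3*c^2*t2 + 144*a*b^3*c^2*t1 + 72*a^2*c^4 + -72*a^2*c^4*t2 + -72*a^2*c^4*t1 + -216*a^2*b*c^3 + 216*a^2*b*c^3*t2 + 216*a^2*b*c^3*t1 + 156*a^2*b^2*c^2 + -156*a^2*b^2*c^2*t2 + -156*a^2*b^2*c^2*t1 + 48*a^3*c^3 + -48*a^3*c^3*t2 + -48*a^3*c^3*t1 + -72*a^3*b*c^2 + 72*a^3*b*c^2*t2 + 72*a^3*b*c^2*t1 + 12*a^4*c^2 + -12*a^4*c^2*t2 + -12*a^4*c^2*t1) * hlu + (2*a*c^5 + 4*a*c^5*t1 + -14*a*b*c^4 + -16*a*b*c^4*t1 + 28*a*b^2*c^3 + 20*a*b^2*c^3*t1 + -16*a*b^3*c^2 + -8*a*b^3*c^2*t1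 + 6*a^2*c^4 + 12*a^2*c^4*t1 + -28*a^2*b*c^3 + -32*a^2*b*c^3*t1 + 28*a^2*b^2*c^2 + 20*a^2*b^2*c^2*t1 + 6*a^3*c^3 + 12*a^3*c^3*t1 + -14*a^3*b*c^2 + -16*a^3*b*c^2*t1 + 2*a^4*c^2 + 4*a^4*c^2*t1) * hT1 + (-2*a*c^5 + -4*a*c^5*t2 + 6*a*b*c^4 + 24*a*b*c^4*t2 + 4*a*b^2*c^3 + -52*a*b^2*c^3*t2 + -24*a*b^3*c^2 + 48*a*b^3*c^2*t2 + 16*a*b^4*c + -16*a*b^4*c*t2 + -2*a^2*c^4 + -16*a^2*c^4*t2 + -12*a^2*b*c^3 + 72*a^2*b*c^3*t2 + 56*a^2*b^2*c^2 + -104*a^2*b^2*c^2*t2 + -48*a^2*b^3*c + 48*a^2*b^3*c*t2 + 6*a^3*c^3 + -24*a^3*c^3*t2 + -42*a^3*b*c^2 + 72*a^3*b*c^2*t2 + 52*a^3*b^2*c + -52*a^3*b^2*c*t2 + 10*a^4*c^2 + -16*a^4*c^2*t2 + -24*a^4*b*c + 24*a^4*b*c*t2 + 4*a^5*c + -4*a^5*c*t2)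 * hT2
  have hM : (2*(a+c-b))^3*(a-2*b+c)^2*c^2 ≠ 0 :=
    mul_ne_zero (mul_ne_zero (pow_ne_zero _ hq) (pow_ne_zero _ hd)) (pow_ne_zero _ hc)
  have h2 := (mul_eq_zero.mp H).resolve_left hM
  linarith

lemma shape1G (X Y Z L O W1 W2 : Pt) (t1 t2 : ℝ)
    (hW1 : W1 = t1 • (Y - X) + X) (hW2 : W2 = t2 • (Z - X) + X)
    (hXY : X ≠ Y) (hXZ : X ≠ Z) (hYZ : Y ≠ Z)
    (hT1 : trel (nsq X Y) (ipd X Y Z) (nsq X Z) t1 = 0)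
    (hT2 : trel (nsq X Z) (ipd X Z Y) (nsq X Y) t2 = 0)
    (hO1 : dist X O = dist Y O) (hO2 : dist X O = dist Z O)
    (hL0 : (nsq Y Z + nsq X Z + nsq X Y) * L 0
      = nsq Y Z * X 0 + nsq X Z * Y 0 + nsq X Y * Z 0)
    (hL1 : (nsq Y Z + nsq X Z + nsq X Y) * L 1
      = nsq Y Z * X 1 + nsq X Z * Y 1 + nsq X Y * Z 1) :
    dist W1 ((3/2 : ℝ) • L + (-(1/2) : ℝ) • O)
      = dist W2 ((3/2 : ℝ) • L + (-(1/2) : ℝ) • O) := by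
  have hq : 2*(nsq X Y + nsq X Z - ipd X Y Z) ≠ 0 := by
    have e : 2*(nsq X Y + nsq X Z - ipd X Y Z) = nsq X Y + nsq X Z + nsq Y Z := by
      unfold nsq ipd; ring
    rw [e]
    have h1 := nsq_pos hXY; have h2 := nsq_pos hXZ; have h3 := nsq_pos hYZ
    have : (0:ℝ) < nsq X Y + nsq X Z + nsq Y Z := by linarith
    exact this.ne'
  have hd : nsq X Y - 2*ipd X Y Z + nsq X Z ≠ 0 := by
    have e : nsq X Y - 2*ipd X Y Z + nsq X Z = nsq Y Z := by unfold nsq ipd; ring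
    rw [e]; exact (nsq_pos hYZ).ne'
  have hT2' : trel (nsq X Z) (ipd X Y Z) (nsq X Y) t2 = 0 := by
    unfold trel ipd nsq at hT2 ⊢; linear_combination hT2
  have hO1sq : dist X O ^ 2 = dist Y O ^ 2 := by rw [hO1]
  have hO2sq : dist X O ^ 2 = dist Z O ^ 2 := by rw [hO2]
  rw [tlc_dsq, tlc_dsq] at hO1sq hO2sq
  have hou : 2*(ipd X Y O) - nsq X Y = 0 := by unfold nsq ipd; linear_combination hO1sq
  have hov : 2*(ipd X Z O) - nsq X Z = 0 := by unfold nsq ipd; linear_combination hO2sq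
  have hlu : 2*(nsq X Y + nsq X Z - ipd X Y Z)*(ipd X Y L)
      - ((nsq X Z)*(nsq X Y)+(nsq X Y)*(ipd X Y Z)) = 0 := by
    simp only [nsq, ipd] at hL0 hL1 ⊢
    linear_combination (Y 0 - X 0) * hL0 + (Y 1 - X 1) * hL1
  have hlv : 2*(nsq X Y + nsq X Z - ipd X Y Z)*(ipd X Z L)
      - ((nsq X Z)*(ipd X Y Z)+(nsq X Y)*(nsq X Z)) = 0 := by
    simp only [nsq, ipd] at hL0 hL1 ⊢
    linear_combination (Z 0 - X 0) * hL0 + (Z 1 - X 1) * hL1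
  have key := shape1A (a := nsq X Y) (b := ipd X Y Z) (c := nsq X Z)
    (lu := ipd X Y L) (lv := ipd X Z L) (ou := ipd X Y O) (ov := ipd X Z O)
    (t1 := t1) (t2 := t2) hq hd hT1 hT2' hou hov hlu hlv
  have hw10 : W1 0 = t1 * (Y 0 - X 0) + X 0 := by
    rw [hW1]; simp [PiLp.add_apply, PiLp.smul_apply, PiLp.sub_apply]
  have hw11 : W1 1 = t1 * (Y 1 - X 1) + X 1 := by
    rw [hW1]; simp [PiLp.add_apply, PiLp.smul_apply, PiLp.sub_apply]
  have hw20 : W2 0 = t2 * (Z 0 - X 0) + X 0 := by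
    rw [hW2]; simp [PiLp.add_apply, PiLp.smul_apply, PiLp.sub_apply]
  have hw21 : W2 1 = t2 * (Z 1 - X 1) + X 1 := by
    rw [hW2]; simp [PiLp.add_apply, PiLp.smul_apply, PiLp.sub_apply]
  have hM0 : ((3/2 : ℝ) • L + (-(1/2) : ℝ) • O) 0 = 3/2 * L 0 - 1/2 * O 0 := by
    simp [PiLp.add_apply, PiLp.smul_apply]; ring
  have hM1 : ((3/2 : ℝ) • L + (-(1/2) : ℝ) • O) 1 = 3/2 * L 1 - 1/2 * O 1 := by
    simp [PiLp.add_apply, PiLp.smul_apply]; ring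
  have hsq : dist W1 ((3/2 : ℝ) • L + (-(1/2) : ℝ) • O) ^ 2
      = dist W2 ((3/2 : ℝ) • L + (-(1/2) : ℝ) • O) ^ 2 := by
    rw [tlc_dsq, tlc_dsq, hw10, hw11, hw20, hw21, hM0, hM1]
    unfold nsq ipd at key
    linear_combination key
  have h := congrArg Real.sqrt hsq
  rwa [Real.sqrt_sq dist_nonneg, Real.sqrt_sq dist_nonneg] at h

lemma shape2G (X Y Z L O W1 W2 : Pt) (t1 t2 : ℝ)
    (hW1 : W1 = t1 • (Y - X) + X) (hW2 : W2 = t2 • (X - Y) + Y)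
    (hXY : X ≠ Y) (hXZ : X ≠ Z) (hYZ : Y ≠ Z)
    (hT1 : trel (nsq X Y) (ipd X Y Z) (nsq X Z) t1 = 0)
    (hT2 : trel (nsq Y X) (ipd Y X Z) (nsq Y Z) t2 = 0)
    (hO1 : dist X O = dist Y O) (hO2 : dist X O = dist Z O)
    (hL0 : (nsq Y Z + nsq X Z + nsq X Y) * L 0
      = nsq Y Z * X 0 + nsq X Z * Y 0 + nsq X Y * Z 0)
    (hL1 : (nsq Y Z + nsq X Z + nsq X Y) * L 1
      = nsq Y Z * X 1 + nsq X Z * Y 1 + nsq X Y * Z 1) :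
    dist W1 ((3/2 : ℝ) • L + (-(1/2) : ℝ) • O)
      = dist W2 ((3/2 : ℝ) • L + (-(1/2) : ℝ) • O) := by
  have hq : 2*(nsq X Y + nsq X Z - ipd X Y Z) ≠ 0 := by
    have e : 2*(nsq X Y + nsq X Z - ipd X Y Z) = nsq X Y + nsq X Z + nsq Y Z := by
      unfold nsq ipd; ring
    rw [e]
    have h1 := nsq_pos hXY; have h2 := nsq_pos hXZ; have h3 := nsq_pos hYZ
    have : (0:ℝ) < nsq X Y + nsq X Z + nsq Y Z := by linarith
    exact this.ne'
  have hd : nsq X Y - 2*ipd X Y Z + nsq X Z ≠ 0 := by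
    have e : nsq X Y - 2*ipd X Y Z + nsq X Z = nsq Y Z := by unfold nsq ipd; ring
    rw [e]; exact (nsq_pos hYZ).ne'
  have hc : nsq X Z ≠ 0 := (nsq_pos hXZ).ne'
  have hT2' : trel (nsq X Y) (nsq X Y - ipd X Y Z)
      (nsq X Y - 2*ipd X Y Z + nsq X Z) t2 = 0 := by
    unfold trel ipd nsq at hT2 ⊢; linear_combination hT2
  have hO1sq : dist X O ^ 2 = dist Y O ^ 2 := by rw [hO1]
  rw [tlc_dsq, tlc_dsq] at hO1sq
  have hou : 2*(ipd X Y O) - nsq X Y = 0 := by unfold nsq ipd; linear_combination hO1sq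
  have hlu : 2*(nsq X Y + nsq X Z - ipd X Y Z)*(ipd X Y L)
      - ((nsq X Z)*(nsq X Y)+(nsq X Y)*(ipd X Y Z)) = 0 := by
    simp only [nsq, ipd] at hL0 hL1 ⊢
    linear_combination (Y 0 - X 0) * hL0 + (Y 1 - X 1) * hL1
  have key := shape2A (a := nsq X Y) (b := ipd X Y Z) (c := nsq X Z)
    (lu := ipd X Y L) (ou := ipd X Y O) (t1 := t1) (t2 := t2) hq hd hc hT1 hT2' hou hlu
  have hw10 : W1 0 = t1 * (Y 0 - X 0) + X 0 := by
    rw [hW1]; simp [PiLp.add_apply, PiLp.smul_apply, PiLp.sub_apply]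
  have hw11 : W1 1 = t1 * (Y 1 - X 1) + X 1 := by
    rw [hW1]; simp [PiLp.add_apply, PiLp.smul_apply, PiLp.sub_apply]
  have hw20 : W2 0 = t2 * (X 0 - Y 0) + Y 0 := by
    rw [hW2]; simp [PiLp.add_apply, PiLp.smul_apply, PiLp.sub_apply]
  have hw21 : W2 1 = t2 * (X 1 - Y 1) + Y 1 := by
    rw [hW2]; simp [PiLp.add_apply, PiLp.smul_apply, PiLp.sub_apply]
  have hM0 : ((3/2 : ℝ) • L + (-(1/2) : ℝ) • O) 0 = 3/2 * L 0 - 1/2 * O 0 := by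
    simp [PiLp.add_apply, PiLp.smul_apply]; ring
  have hM1 : ((3/2 : ℝ) • L + (-(1/2) : ℝ) • O) 1 = 3/2 * L 1 - 1/2 * O 1 := by
    simp [PiLp.add_apply, PiLp.smul_apply]; ring
  have hsq : dist W1 ((3/2 : ℝ) • L + (-(1/2) : ℝ) • O) ^ 2
      = dist W2 ((3/2 : ℝ) • L + (-(1/2) : ℝ) • O) ^ 2 := by
    rw [tlc_dsq, tlc_dsq, hw10, hw11, hw20, hw21, hM0, hM1]
    unfold nsq ipd at key
    linear_combination key
  have h := congrArg Real.sqrt hsq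
  rwa [Real.sqrt_sq dist_nonneg, Real.sqrt_sq dist_nonneg] at h

theorem stmt12    (A B C : Pt) (hABC : AffineIndependent ℝ ![A, B, C])
    (ω : EuclideanGeometry.Sphere Pt) (hr : 0 < ω.radius)
    (hA : A ∈ ω) (hB : B ∈ ω) (hC : C ∈ ω)
    (L : Pt) (hL : L = lemoinePoint A B C)
    (sA sB sC : EuclideanGeometry.Sphere Pt)
    (hsA : B ∈ sA ∧ L ∈ sA ∧ C ∈ sA) (hsB : C ∈ sB ∧ L ∈ sB ∧ A ∈ sB) (hsC : A ∈ sC ∧ L ∈ sC ∧ B ∈ sC)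
    (A_b : Pt) (hA_bc : A_b ∈ sA) (hA_bl : A_b ∈ affineSpan ℝ ({A, B} : Set Pt)) (hA_bne : A_b ≠ B)
    (A_c : Pt) (hA_cc : A_c ∈ sA) (hA_cl : A_c ∈ affineSpan ℝ ({A, C} : Set Pt)) (hA_cne : A_c ≠ C)
    (B_c : Pt) (hB_cc : B_c ∈ sB) (hB_cl : B_c ∈ affineSpan ℝ ({B, C} : Set Pt)) (hB_cne : B_c ≠ C)
    (B_a : Pt) (hB_ac : B_a ∈ sB) (hB_al : B_a ∈ affineSpan ℝ ({B, A} : Set Pt)) (hB_ane : B_a ≠ A)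
    (C_a : Pt) (hC_ac : C_a ∈ sC) (hC_al : C_a ∈ affineSpan ℝ ({C, A} : Set Pt)) (hC_ane : C_a ≠ A)
    (C_b : Pt) (hC_bc : C_b ∈ sC) (hC_bl : C_b ∈ affineSpan ℝ ({C, B} : Set Pt)) (hC_bne : C_b ≠ B)
    : ∃ s : EuclideanGeometry.Sphere Pt, (A_b ∈ s ∧ A_c ∈ s ∧ B_a ∈ s ∧ B_c ∈ s ∧ C_a ∈ s ∧ C_b ∈ s) ∧
      s.center - L = (-(1 / 2) : ℝ) • (ω.center - L) := by
  obtain ⟨hsAB, hsAL, hsAC⟩ := hsA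
  obtain ⟨hsBC, hsBL, hsBA⟩ := hsB
  obtain ⟨hsCA, hsCL, hsCB⟩ := hsC
  -- distinctness
  have hAB : A ≠ B := by
    have := hABC.injective.ne (show (0 : Fin 3) ≠ 1 by decide); simpa using this
  have hAC : A ≠ C := by
    have := hABC.injective.ne (show (0 : Fin 3) ≠ 2 by decide); simpa using this
  have hBC : B ≠ C := by
    have := hABC.injective.ne (show (1 : Fin 3) ≠ 2 by decide); simpa using this
  -- circumcenter facts
  have hOA := EuclideanGeometry.mem_sphere.mp hA
  have hOB := EuclideanGeometry.mem_sphere.mp hB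
  have hOC := EuclideanGeometry.mem_sphere.mp hC
  have hOAB : dist A ω.center = dist B ω.center := hOA.trans hOB.symm
  have hOAC : dist A ω.center = dist C ω.center := hOA.trans hOC.symm
  have hOBC : dist B ω.center = dist C ω.center := hOB.trans hOC.symm
  have hOBA : dist B ω.center = dist A ω.center := hOAB.symm
  have hOCA : dist C ω.center = dist A ω.center := hOAC.symm
  have hOCB : dist C ω.center = dist B ω.center := hOBC.symm
  -- Lemoine point, coordinates
  have hqd : dist B C ^ 2 + dist C A ^ 2 + dist A B ^ 2 ≠ 0 := by
    have h1 : 0 < dist A B := dist_pos.mpr hAB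
    have h2 : 0 < dist B C := dist_pos.mpr hBC
    have h3 : 0 < dist C A := dist_pos.mpr (fun h => hAC h.symm)
    have := pow_pos h1 2; have := pow_pos h2 2; have := pow_pos h3 2
    have : (0:ℝ) < dist B C ^ 2 + dist C A ^ 2 + dist A B ^ 2 := by positivity
    exact this.ne'
  have hLvec : (dist B C ^ 2 + dist C A ^ 2 + dist A B ^ 2) • L
      = dist B C ^ 2 • A + dist C A ^ 2 • B + dist A B ^ 2 • C := by
    rw [hL]; unfold lemoinePoint
    match_scalars <;> field_simp
  have hm0 : (dist B C ^ 2 + dist C A ^ 2 + dist A B ^ 2) * L 0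
      = dist B C ^ 2 * A 0 + dist C A ^ 2 * B 0 + dist A B ^ 2 * C 0 := by
    have h := congrArg (fun v : Pt => v 0) hLvec
    simpa [PiLp.add_apply, PiLp.smul_apply] using h
  have hm1 : (dist B C ^ 2 + dist C A ^ 2 + dist A B ^ 2) * L 1
      = dist B C ^ 2 * A 1 + dist C A ^ 2 * B 1 + dist A B ^ 2 * C 1 := by
    have h := congrArg (fun v : Pt => v 1) hLvec
    simpa [PiLp.add_apply, PiLp.smul_apply] using h
  rw [tlc_dsq, tlc_dsq, tlc_dsq] at hm0 hm1
  -- line parameters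
  obtain ⟨tab, hWab⟩ := tlc_line hA_bl
  obtain ⟨tac, hWac⟩ := tlc_line hA_cl
  obtain ⟨tbc, hWbc⟩ := tlc_line hB_cl
  obtain ⟨tba, hWba⟩ := tlc_line hB_al
  obtain ⟨tca, hWca⟩ := tlc_line hC_al
  obtain ⟨tcb, hWcb⟩ := tlc_line hC_bl
  -- sphere chord facts
  have msp := fun {x : Pt} {s : EuclideanGeometry.Sphere Pt} (h : x ∈ s) =>
    EuclideanGeometry.mem_sphere.mp h
  have pAb : dist A_b sA.center = dist B sA.center := (msp hA_bc).trans (msp hsAB).symm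
  have pAc : dist A_c sA.center = dist C sA.center := (msp hA_cc).trans (msp hsAC).symm
  have pABC : dist B sA.center = dist C sA.center := (msp hsAB).trans (msp hsAC).symm
  have pABL : dist B sA.center = dist L sA.center := (msp hsAB).trans (msp hsAL).symm
  have pACB : dist C sA.center = dist B sA.center := pABC.symm
  have pACL : dist C sA.center = dist L sA.center := (msp hsAC).trans (msp hsAL).symm
  have pBc : dist B_c sB.center = dist C sB.center := (msp hB_cc).trans (msp hsBC).symm
  have pBa : dist B_a sB.center = dist A sB.center := (msp hB_ac).trans (msp hsBA).symm
  have pBCA : dist C sB.center = dist A sB.center := (msp hsBC).trans (msp hsBA).symm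
  have pBCL : dist C sB.center = dist L sB.center := (msp hsBC).trans (msp hsBL).symm
  have pBAC : dist A sB.center = dist C sB.center := pBCA.symm
  have pBAL : dist A sB.center = dist L sB.center := (msp hsBA).trans (msp hsBL).symm
  have pCa : dist C_a sC.center = dist A sC.center := (msp hC_ac).trans (msp hsCA).symm
  have pCb : dist C_b sC.center = dist B sC.center := (msp hC_bc).trans (msp hsCB).symm
  have pCAB : dist A sC.center = dist B sC.center := (msp hsCA).trans (msp hsCB).symm
  have pCAL : dist A sC.center = dist L sC.center := (msp hsCA).trans (msp hsCL).symm
  have pCBA : dist B sC.center = dist A sC.center := pCAB.symm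
  have pCBL : dist B sC.center = dist L sC.center := (msp hsCB).trans (msp hsCL).symm
  -- t relations
  have hTab := tEqG A B C L sA.center A_b tab hWab hA_bne hAB pAb pABC pABL
    (by unfold nsq; linear_combination hm0) (by unfold nsq; linear_combination hm1)
  have hTac := tEqG A C B L sA.center A_c tac hWac hA_cne hAC pAc pACB pACL
    (by unfold nsq; linear_combination hm0) (by unfold nsq; linear_combination hm1)
  have hTbc := tEqG B C A L sB.center B_c tbc hWbc hB_cne hBC pBc pBCA pBCL
    (by unfold nsq; linear_combination hm0) (by unfold nsq; linear_combination hm1)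
  have hTba := tEqG B A C L sB.center B_a tba hWba hB_ane (fun h => hAB h.symm) pBa pBAC pBAL
    (by unfold nsq; linear_combination hm0) (by unfold nsq; linear_combination hm1)
  have hTca := tEqG C A B L sC.center C_a tca hWca hC_ane (fun h => hAC h.symm) pCa pCAB pCAL
    (by unfold nsq; linear_combination hm0) (by unfold nsq; linear_combination hm1)
  have hTcb := tEqG C B A L sC.center C_b tcb hWcb hC_bne (fun h => hBC h.symm) pCb pCBA pCBL
    (by unfold nsq; linear_combination hm0) (by unfold nsq; linear_combination hm1)
  -- the circle
  have s1 := shape1G A B C L ω.center A_b A_c tab tac hWab hWac hAB hAC hBC hTab hTac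
    hOAB hOAC
    (by unfold nsq; linear_combination hm0) (by unfold nsq; linear_combination hm1)
  have s2 := shape2G A B C L ω.center A_b B_a tab tba hWab hWba hAB hAC hBC hTab hTba
    hOAB hOAC
    (by unfold nsq; linear_combination hm0) (by unfold nsq; linear_combination hm1)
  have s3 := shape1G B C A L ω.center B_c B_a tbc tba hWbc hWba hBC (fun h => hAB h.symm)
    (fun h => hAC h.symm) hTbc hTba hOBC hOBA
    (by unfold nsq; linear_combination hm0) (by unfold nsq; linear_combination hm1)
  have s4 := shape2G B C A L ω.center B_c C_b tbc tcb hWbc hWcb hBC (fun h => hAB h.symm)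
    (fun h => hAC h.symm) hTbc hTcb hOBC hOBA
    (by unfold nsq; linear_combination hm0) (by unfold nsq; linear_combination hm1)
  have s5 := shape1G C A B L ω.center C_a C_b tca tcb hWca hWcb (fun h => hAC h.symm)
    (fun h => hBC h.symm) hAB hTca hTcb hOCA hOCB
    (by unfold nsq; linear_combination hm0) (by unfold nsq; linear_combination hm1)
  set M : Pt := (3/2 : ℝ) • L + (-(1/2) : ℝ) • ω.center with hM
  refine ⟨⟨M, dist A_b M⟩, ⟨?_, ?_, ?_, ?_, ?_, ?_⟩, ?_⟩
  · exact EuclideanGeometry.mem_sphere.mpr rfl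
  · exact EuclideanGeometry.mem_sphere.mpr s1.symm
  · exact EuclideanGeometry.mem_sphere.mpr s2.symm
  · exact EuclideanGeometry.mem_sphere.mpr (s3.trans s2.symm)
  · exact EuclideanGeometry.mem_sphere.mpr (s5.trans ((s4.symm).trans (s3.trans s2.symm)))
  · exact EuclideanGeometry.mem_sphere.mpr ((s4.symm).trans (s3.trans s2.symm))
  · show M - L = (-(1 / 2) : ℝ) • (ω.center - L)
    rw [hM]; module
end
end

section
/- In the Q.T. Bui construction at vertex A, the chord A_b A_c of the circle through A and L tangent to ω at A is parallel to BC. -/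
open EuclideanGeometry RealInnerProductSpace

noncomputable section

lemma keyratio (O A B P : Pt) (s u : ℝ) (hBA : B ≠ A)
    (hB : dist B O = dist A O)
    (hP : P - A = u • (B - A))
    (hPsph : dist P (s • (O - A) + A) = dist A (s • (O - A) + A))
    (hPne : P ≠ A) : u = s := by
  have hu0 : u ≠ 0 := by
    intro h; apply hPne; rw [h, zero_smul] at hP
    exact sub_eq_zero.mp hP
  set b : Pt := B - A with hb
  set o : Pt := O - A with ho
  have hBA' : b ≠ 0 := sub_ne_zero.mpr hBA
  have hnz : (0:ℝ) < ⟪b, b⟫ := by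
    rw [real_inner_self_eq_norm_sq]
    exact pow_pos (norm_pos_iff.mpr hBA') 2
  have e1 : ⟪b - o, b - o⟫ = ⟪o, o⟫ := by
    have h1 : b - o = B - O := by rw [hb, ho]; abel
    have h2 : A - O = -o := by rw [ho]; abel
    rw [h1, show ⟪o,o⟫ = ⟪-o,-o⟫ by simp, ← h2,
      real_inner_self_eq_norm_mul_norm, real_inner_self_eq_norm_mul_norm,
      ← dist_eq_norm, ← dist_eq_norm, hB]
  have e1' : ⟪b, b⟫ = 2 * ⟪o, b⟫ := by
    simp only [inner_sub_left, inner_sub_right] at e1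
    have hc : ⟪b, o⟫ = ⟪o, b⟫ := real_inner_comm o b
    linarith
  have e2 : ⟪u • b - s • o, u • b - s • o⟫ = ⟪s • o, s • o⟫ := by
    have h1 : u • b - s • o = P - (s • o + A) := by rw [← hP]; abel
    have h2 : A - (s • o + A) = -(s • o) := by abel
    rw [h1, show ⟪s•o,s•o⟫ = ⟪-(s•o),-(s•o)⟫ by simp, ← h2,
      real_inner_self_eq_norm_mul_norm, real_inner_self_eq_norm_mul_norm,
      ← dist_eq_norm, ← dist_eq_norm, hPsph]
  simp only [inner_sub_left, inner_sub_right, real_inner_smul_left,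
    real_inner_smul_right] at e2
  have hc : ⟪b, o⟫ = ⟪o, b⟫ := real_inner_comm o b
  rw [hc] at e2
  have key2 : u * (u * ⟪b, b⟫) = u * (s * ⟪b, b⟫) := by
    linear_combination e2 - u * s * e1'
  exact mul_right_cancel₀ (ne_of_gt hnz) (mul_left_cancel₀ hu0 key2)

theorem stmt14    (A B C : Pt) (hABC : AffineIndependent ℝ ![A, B, C])
    (ω : EuclideanGeometry.Sphere Pt) (hr : 0 < ω.radius)
    (hA : A ∈ ω) (hB : B ∈ ω) (hC : C ∈ ω)
    (L : Pt) (hL : L = lemoinePoint A B C)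
    (ωa : EuclideanGeometry.Sphere Pt) (hωa1 : A ∈ ωa) (hωa2 : L ∈ ωa)
    (hωat : CircleTangentAt ωa ω A)
    (A_b : Pt) (hA_bc : A_b ∈ ωa) (hA_bl : A_b ∈ affineSpan ℝ ({A, B} : Set Pt)) (hA_bne : A_b ≠ A)
    (A_c : Pt) (hA_cc : A_c ∈ ωa) (hA_cl : A_c ∈ affineSpan ℝ ({A, C} : Set Pt)) (hA_cne : A_c ≠ A)
    : ∃ t : ℝ, A_c - A_b = t • (C - B) := by
  obtain ⟨-, -, hcol⟩ := hωat
  have hinj := hABC.injective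
  have hBA : B ≠ A := by
    intro h; exact absurd (hinj (show ![A,B,C] 1 = ![A,B,C] 0 by simpa using h)) (by decide)
  have hCA : C ≠ A := by
    intro h; exact absurd (hinj (show ![A,B,C] 2 = ![A,B,C] 0 by simpa using h)) (by decide)
  have hAmem : A ∈ ({ωa.center, ω.center, A} : Set Pt) := by simp
  obtain ⟨v, hv⟩ := (collinear_iff_of_mem hAmem).mp hcol
  obtain ⟨r₂, hr₂⟩ := hv ωa.center (by simp)
  obtain ⟨r₁, hr₁⟩ := hv ω.center (by simp)
  have hAO : A ≠ ω.center := by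
    intro h
    have : dist A ω.center = ω.radius := hA
    rw [← h, dist_self] at this
    exact absurd this.symm (ne_of_gt hr)
  have hr₁0 : r₁ ≠ 0 := by
    intro h; apply hAO
    rw [hr₁, h, zero_smul, zero_vadd]
  set s : ℝ := r₂ / r₁ with hs
  have hcen : ωa.center = s • (ω.center - A) + A := by
    have h1 : ω.center - A = r₁ • v := by
      rw [hr₁]; simp [vadd_eq_add]
    rw [h1, hr₂, smul_smul, hs, div_mul_cancel₀ _ hr₁0]
    simp [vadd_eq_add]
  have hdb : dist A_b (s • (ω.center - A) + A) = dist A (s • (ω.center - A) + A) := by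
    rw [← hcen]
    have h1 : dist A_b ωa.center = ωa.radius := hA_bc
    have h2 : dist A ωa.center = ωa.radius := hωa1
    rw [h1, h2]
  have hdc : dist A_c (s • (ω.center - A) + A) = dist A (s • (ω.center - A) + A) := by
    rw [← hcen]
    have h1 : dist A_c ωa.center = ωa.radius := hA_cc
    have h2 : dist A ωa.center = ωa.radius := hωa1
    rw [h1, h2]
  have hdistB : dist B ω.center = dist A ω.center := by
    rw [(show dist B ω.center = ω.radius from hB), (show dist A ω.center = ω.radius from hA)]
  have hdistC : dist C ω.center = dist A ω.center := by
    rw [(show dist C ω.center = ω.radius from hC), (show dist A ω.center = ω.radius from hA)]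
  obtain ⟨u, hu⟩ : ∃ u : ℝ, A_b - A = u • (B - A) := by
    have : (A_b -ᵥ A) +ᵥ A ∈ affineSpan ℝ ({A, B} : Set Pt) := by
      simpa using hA_bl
    obtain ⟨r, hrr⟩ := vadd_left_mem_affineSpan_pair.mp this
    exact ⟨r, by simpa [vsub_eq_sub] using hrr.symm⟩
  obtain ⟨w, hw⟩ : ∃ w : ℝ, A_c - A = w • (C - A) := by
    have : (A_c -ᵥ A) +ᵥ A ∈ affineSpan ℝ ({A, C} : Set Pt) := by
      simpa using hA_cl
    obtain ⟨r, hrr⟩ := vadd_left_mem_affineSpan_pair.mp this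
    exact ⟨r, by simpa [vsub_eq_sub] using hrr.symm⟩
  have hus : u = s := keyratio ω.center A B A_b s u hBA hdistB hu hdb hA_bne
  have hws : w = s := keyratio ω.center A C A_c s w hCA hdistC hw hdc hA_cne
  refine ⟨s, ?_⟩
  have : A_c - A_b = (A_c - A) - (A_b - A) := by abel
  rw [this, hu, hw, hus, hws, ← smul_sub]
  congr 1
  abel
end
end

section
/- Let O₁' be the center of the circle through A and L tangent to ω at A, and O₁ the center of the circle through A' and L tangent to ω at A' (A' the second intersection of AL with ω). Then the quadrilateral L O₁ O O₁' is a parallelogram, where O is the circumcenter: L - O₁' = O₁ - O. -/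
open EuclideanGeometry RealInnerProductSpace

noncomputable section

lemma collinear_exists_smul {p q r : Pt}
    (h : Collinear ℝ ({p, q, r} : Set Pt)) (hrq : r ≠ q) :
    ∃ t : ℝ, p - q = t • (r - q) := by
  rw [collinear_iff_of_mem (Set.mem_insert_of_mem _ (Set.mem_insert _ _))] at h
  obtain ⟨v, hv⟩ := h
  obtain ⟨tp, htp⟩ := hv p (Set.mem_insert _ _)
  obtain ⟨tr, htr⟩ := hv r (by simp)
  have hv0 : tr ≠ 0 := by
    intro h0
    exact hrq (by rw [htr, h0, zero_smul, zero_vadd])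
  refine ⟨tp / tr, ?_⟩
  rw [htp, htr, vadd_eq_add, vadd_eq_add, add_sub_cancel_right, add_sub_cancel_right,
    smul_smul, div_mul_cancel₀ _ hv0]


theorem stmt15    (A B C : Pt) (hABC : AffineIndependent ℝ ![A, B, C])
    (ω : EuclideanGeometry.Sphere Pt) (hr : 0 < ω.radius)
    (hA : A ∈ ω) (hB : B ∈ ω) (hC : C ∈ ω)
    (L : Pt) (hL : L = lemoinePoint A B C)
    (A' : Pt) (hA'w : A' ∈ ω) (hA'ne : A' ≠ A) (hA'col : Collinear ℝ ({A, L, A'} : Set Pt))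
    (hLA : L ≠ A) (hLA' : L ≠ A')
    (ωa : EuclideanGeometry.Sphere Pt) (hωa1 : A ∈ ωa) (hωa2 : L ∈ ωa)
    (hωat : CircleTangentAt ωa ω A)
    (ω₁ : EuclideanGeometry.Sphere Pt) (hω₁1 : A' ∈ ω₁) (hω₁2 : L ∈ ω₁)
    (hω₁t : CircleTangentAt ω₁ ω A')
    : L - ωa.center = ω₁.center - ω.center := by
  set O := ω.center with hO
  set R := ω.radius with hR
  -- membership as distances
  rw [EuclideanGeometry.mem_sphere] at hA hA'w hωa1 hωa2 hω₁1 hω₁2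
  have hAO : A ≠ O := by
    intro h; rw [h, dist_self] at hA; linarith
  have hA'O : A' ≠ O := by
    intro h; rw [h, dist_self] at hA'w; linarith
  -- centers on lines
  obtain ⟨s, hs⟩ := collinear_exists_smul hωat.2.2 hAO
  obtain ⟨s', hs'⟩ := collinear_exists_smul hω₁t.2.2 hA'O
  have hcol' : Collinear ℝ ({L, A, A'} : Set Pt) := by
    have : ({L, A, A'} : Set Pt) = {A, L, A'} := by
      ext z; simp; tauto
    rw [this]; exact hA'col
  obtain ⟨u, hu⟩ := collinear_exists_smul hcol' hA'ne
  set x := A - O with hx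
  set y := A' - O with hy
  have hxx : ⟪x, x⟫ = R ^ 2 := by
    rw [real_inner_self_eq_norm_sq, hx, ← dist_eq_norm, hA]
  have hyy : ⟪y, y⟫ = R ^ 2 := by
    rw [real_inner_self_eq_norm_sq, hy, ← dist_eq_norm, hA'w]
  set I := ⟪x, y⟫ with hI
  -- key nondegeneracies
  have hxy : x ≠ y := by
    intro h
    apply hA'ne
    have h2 : A' - O = A - O := by rw [← hx, ← hy, h]
    exact sub_left_injective h2
  have hD : R ^ 2 - I ≠ 0 := by
    have hne : x - y ≠ 0 := sub_ne_zero.mpr hxy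
    have hpos : (0:ℝ) < ⟪x - y, x - y⟫ := by
      rw [real_inner_self_eq_norm_sq]
      exact pow_pos (norm_pos_iff.mpr hne) 2
    have hexp : ⟪x - y, x - y⟫ = 2 * (R ^ 2 - I) := by
      simp only [inner_sub_left, inner_sub_right]
      rw [real_inner_comm x y, hxx, hyy, hI]
      ring
    rw [hexp] at hpos
    intro h0; rw [h0] at hpos; linarith
  have hu0 : u ≠ 0 := by
    intro h0; apply hLA
    have : L - A = 0 := by rw [hu, h0, zero_smul]
    exact sub_eq_zero.mp this
  have hu1 : u ≠ 1 := by
    intro h1; apply hLA'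
    have : L - A' = 0 := by
      have : L - A' = (L - A) - (A' - A) := by abel
      rw [this, hu, h1, one_smul, sub_self]
    exact sub_eq_zero.mp this
  -- L - O in terms of x, y, u
  have hLO : L - O = x + u • (y - x) := by
    have h1 : A' - A = y - x := by rw [hx, hy]; abel
    have : L - O = (L - A) + x := by rw [hx]; abel
    rw [this, hu, h1]; abel
  -- distance conditions: equal radii
  have e1 : ⟪A - ωa.center, A - ωa.center⟫ = ⟪L - ωa.center, L - ωa.center⟫ := by
    rw [real_inner_self_eq_norm_sq, real_inner_self_eq_norm_sq, ← dist_eq_norm, ← dist_eq_norm,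
      hωa1, hωa2]
  have e2 : ⟪A' - ω₁.center, A' - ω₁.center⟫ = ⟪L - ω₁.center, L - ω₁.center⟫ := by
    rw [real_inner_self_eq_norm_sq, real_inner_self_eq_norm_sq, ← dist_eq_norm, ← dist_eq_norm,
      hω₁1, hω₁2]
  have hAc : A - ωa.center = x - s • x := by
    have : A - ωa.center = (A - O) - (ωa.center - O) := by abel
    rw [this, hs, hx]
  have hLc : L - ωa.center = (x + u • (y - x)) - s • x := by
    have : L - ωa.center = (L - O) - (ωa.center - O) := by abel
    rw [this, hs, hLO, hx]
  have hA'c : A' - ω₁.center = y - s' • y := by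
    have : A' - ω₁.center = (A' - O) - (ω₁.center - O) := by abel
    rw [this, hs', hy]
  have hLc' : L - ω₁.center = (x + u • (y - x)) - s' • y := by
    have : L - ω₁.center = (L - O) - (ω₁.center - O) := by abel
    rw [this, hs', hLO, hy]
  rw [hAc, hLc] at e1
  rw [hA'c, hLc'] at e2
  simp only [inner_sub_left, inner_sub_right, inner_add_left, inner_add_right,
    real_inner_smul_left, real_inner_smul_right] at e1 e2
  rw [real_inner_comm x y, hxx, hyy] at e1
  rw [real_inner_comm x y, hxx, hyy] at e2
  rw [← hI] at e1 e2
  -- now scalar equations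
  have f1 : 2 * u * (R ^ 2 - I) * (1 - u - s) = 0 := by linear_combination e1
  have f2 : 2 * (1 - u) * (R ^ 2 - I) * (u - s') = 0 := by linear_combination e2
  have hsv : s = 1 - u := by
    rcases mul_eq_zero.mp f1 with h | h
    · rcases mul_eq_zero.mp h with h' | h'
      · rcases mul_eq_zero.mp h' with h'' | h''
        · norm_num at h''
        · exact absurd h'' hu0
      · exact absurd h' hD
    · linarith
  have hs'v : s' = u := by
    rcases mul_eq_zero.mp f2 with h | h
    · rcases mul_eq_zero.mp h with h' | h'
      · rcases mul_eq_zero.mp h' with h'' | h''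
        · norm_num at h''
        · exact absurd (by linarith : u = 1) hu1
      · exact absurd h' hD
    · linarith
  -- conclude
  have goal1 : L - ωa.center = u • y := by
    rw [hLc, hsv]
    module
  have goal2 : ω₁.center - O = u • y := by
    rw [hs', hs'v]
  rw [goal1, goal2]
end
end

section
/- (Converse, key step) With P inside triangle ABC and the construction of Theorem 5.1: if the six points A_b, A_c, B_a, B_c, C_a, C_b are concyclic, then for each vertex, e.g. A, the power of A with respect to ω₂ equals the power of A with respect to ω₃, and hence line AP is the radical axis of ω₂ and ω₃; consequently A, P, A', and the pole X of B'C' with respect to ω are collinear. -/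
open EuclideanGeometry RealInnerProductSpace

noncomputable section

lemma pow_eq_inner (s : EuclideanGeometry.Sphere Pt) (p x y : Pt)
    (hx : x ∈ s) (hy : y ∈ s) (hxy : x ≠ y)
    (hcol : Collinear ℝ ({p, x, y} : Set Pt)) :
    circlePower p s = ⟪x - p, y - p⟫ := by
  rw [EuclideanGeometry.mem_sphere] at hx hy
  by_cases hxp : x = p
  · subst hxp
    simp [circlePower, hx]
  · obtain ⟨p₀, v, h⟩ := (collinear_iff_exists_forall_eq_smul_vadd (k := ℝ) _).1 hcol
    obtain ⟨r₀, hr₀⟩ := h p (by simp)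
    obtain ⟨r₁, hr₁⟩ := h x (by simp)
    obtain ⟨r₂, hr₂⟩ := h y (by simp)
    have hxpv : x - p = (r₁ - r₀) • v := by
      rw [hr₁, hr₀]; simp [vadd_eq_add, sub_smul]
    have hypv : y - p = (r₂ - r₀) • v := by
      rw [hr₂, hr₀]; simp [vadd_eq_add, sub_smul]
    have ha : r₁ - r₀ ≠ 0 := by
      intro h0
      apply hxp
      have : x - p = 0 := by rw [hxpv, h0, zero_smul]
      exact sub_eq_zero.1 this
    obtain ⟨k, hyk⟩ : ∃ k : ℝ, y - p = k • (x - p) :=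
      ⟨(r₂ - r₀) / (r₁ - r₀), by rw [hxpv, hypv, smul_smul, div_mul_cancel₀ _ ha]⟩
    have hk1 : k ≠ 1 := by
      intro h1
      apply hxy
      have : y - p = x - p := by rw [hyk, h1, one_smul]
      have := sub_left_injective this
      exact this.symm
    have h1 : ‖(x - p) - (s.center - p)‖ ^ 2 = s.radius ^ 2 := by
      have : (x - p) - (s.center - p) = x - s.center := by abel
      rw [this, ← dist_eq_norm, hx]
    have h2 : ‖k • (x - p) - (s.center - p)‖ ^ 2 = s.radius ^ 2 := by
      rw [← hyk]
      have : (y - p) - (s.center - p) = y - s.center := by abel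
      rw [this, ← dist_eq_norm, hy]
    rw [norm_sub_sq_real] at h1 h2
    rw [norm_smul, Real.norm_eq_abs, real_inner_smul_left, mul_pow, sq_abs] at h2
    rw [hyk, real_inner_smul_right, real_inner_self_eq_norm_sq]
    unfold circlePower
    rw [dist_eq_norm, ← norm_neg (p - s.center)]
    have : -(p - s.center) = s.center - p := by abel
    rw [this]
    have hkk : k - 1 ≠ 0 := sub_ne_zero.2 hk1
    have hfac : (1 - k) * ((1 + k) * ‖x - p‖ ^ 2 - 2 * ⟪x - p, s.center - p⟫) = 0 := by
      linear_combination h1 - h2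
    have h3 : (1 + k) * ‖x - p‖ ^ 2 - 2 * ⟪x - p, s.center - p⟫ = 0 := by
      rcases mul_eq_zero.1 hfac with h0 | h0
      · exact absurd (by linarith : k = 1) hk1
      · exact h0
    linear_combination h1 - h3

lemma pow_tangent (s : EuclideanGeometry.Sphere Pt) (x X : Pt) (hx : x ∈ s)
    (h : ⟪X - x, x - s.center⟫ = 0) : circlePower X s = ‖X - x‖ ^ 2 := by
  rw [EuclideanGeometry.mem_sphere, dist_eq_norm] at hx
  unfold circlePower
  rw [dist_eq_norm]
  have hd : X - s.center = (X - x) + (x - s.center) := by abel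
  rw [hd, norm_add_sq_real, h, ← hx]
  ring

lemma tangent_perp (s t : EuclideanGeometry.Sphere Pt) (x X : Pt)
    (ht : CircleTangentAt s t x) (hxc : x ≠ t.center)
    (h : ⟪X - x, x - t.center⟫ = 0) : ⟪X - x, x - s.center⟫ = 0 := by
  obtain ⟨-, -, hcol⟩ := ht
  obtain ⟨p₀, v, hh⟩ := (collinear_iff_exists_forall_eq_smul_vadd (k := ℝ) _).1 hcol
  obtain ⟨r₁, hr₁⟩ := hh s.center (by simp)
  obtain ⟨r₂, hr₂⟩ := hh t.center (by simp)
  obtain ⟨r₃, hr₃⟩ := hh x (by simp)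
  have h1 : x - s.center = (r₃ - r₁) • v := by rw [hr₁, hr₃]; simp [vadd_eq_add, sub_smul]
  have h2 : x - t.center = (r₃ - r₂) • v := by rw [hr₂, hr₃]; simp [vadd_eq_add, sub_smul]
  have hb : r₃ - r₂ ≠ 0 := by
    intro h0
    apply hxc
    have : x - t.center = 0 := by rw [h2, h0, zero_smul]
    exact sub_eq_zero.1 this
  have hks : x - s.center = ((r₃ - r₁) / (r₃ - r₂)) • (x - t.center) := by
    rw [h1, h2, smul_smul, div_mul_cancel₀ _ hb]
  rw [hks, real_inner_smul_right, h, mul_zero]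

lemma pow_diff (s t : EuclideanGeometry.Sphere Pt) (p q : Pt) :
    (circlePower p s - circlePower p t) - (circlePower q s - circlePower q t)
      = 2 * ⟪p - q, t.center - s.center⟫ := by
  unfold circlePower
  simp only [dist_eq_norm, norm_sub_sq_real, inner_sub_left, inner_sub_right]
  ring

lemma mem_sphere_pow {p : Pt} {s : EuclideanGeometry.Sphere Pt} (h : p ∈ s) :
    circlePower p s = 0 := by
  simp [circlePower, EuclideanGeometry.mem_sphere.1 h]

theorem stmt17    (A B C : Pt) (hABC : AffineIndependent ℝ ![A, B, C])
    (ω : EuclideanGeometry.Sphere Pt) (hr : 0 < ω.radius)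
    (hA : A ∈ ω) (hB : B ∈ ω) (hC : C ∈ ω)
    (P : Pt) (hP : P ∈ interior (convexHull ℝ ({A, B, C} : Set Pt)))
    (A' : Pt) (hA'w : A' ∈ ω) (hA'ne : A' ≠ A) (hA'col : Collinear ℝ ({A, P, A'} : Set Pt))
    (B' : Pt) (hB'w : B' ∈ ω) (hB'ne : B' ≠ B) (hB'col : Collinear ℝ ({B, P, B'} : Set Pt))
    (C' : Pt) (hC'w : C' ∈ ω) (hC'ne : C' ≠ C) (hC'col : Collinear ℝ ({C, P, C'} : Set Pt))
    (ω₁ : EuclideanGeometry.Sphere Pt) (hω₁1 : A' ∈ ω₁) (hω₁2 : P ∈ ω₁)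
    (hω₁t : CircleTangentAt ω₁ ω A')
    (A_b A_c : Pt) (hA_bA_c : A_b ≠ A_c)
    (hA_bc : A_b ∈ ω₁) (hA_bl : A_b ∈ affineSpan ℝ ({B, C} : Set Pt))
    (hA_cc : A_c ∈ ω₁) (hA_cl : A_c ∈ affineSpan ℝ ({B, C} : Set Pt))
    (ω₂ : EuclideanGeometry.Sphere Pt) (hω₂1 : B' ∈ ω₂) (hω₂2 : P ∈ ω₂)
    (hω₂t : CircleTangentAt ω₂ ω B')
    (B_c B_a : Pt) (hB_cB_a : B_c ≠ B_a)
    (hB_cc : B_c ∈ ω₂) (hB_cl : B_c ∈ affineSpan ℝ ({C, A} : Set Pt))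
    (hB_ac : B_a ∈ ω₂) (hB_al : B_a ∈ affineSpan ℝ ({C, A} : Set Pt))
    (ω₃ : EuclideanGeometry.Sphere Pt) (hω₃1 : C' ∈ ω₃) (hω₃2 : P ∈ ω₃)
    (hω₃t : CircleTangentAt ω₃ ω C')
    (C_a C_b : Pt) (hC_aC_b : C_a ≠ C_b)
    (hC_ac : C_a ∈ ω₃) (hC_al : C_a ∈ affineSpan ℝ ({A, B} : Set Pt))
    (hC_bc : C_b ∈ ω₃) (hC_bl : C_b ∈ affineSpan ℝ ({A, B} : Set Pt))
    (X : Pt) (hXB' : ⟪X - B', B' - ω.center⟫ = 0) (hXC' : ⟪X - C', C' - ω.center⟫ = 0)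
    (hne : ω₂ ≠ ω₃)
    (hconc : ∃ s : EuclideanGeometry.Sphere Pt, A_b ∈ s ∧ A_c ∈ s ∧ B_a ∈ s ∧ B_c ∈ s ∧ C_a ∈ s ∧ C_b ∈ s) :
    circlePower A ω₂ = circlePower A ω₃ ∧
    {p : Pt | circlePower p ω₂ = circlePower p ω₃} = (affineSpan ℝ ({A, P} : Set Pt) : Set Pt) ∧
    Collinear ℝ ({A, P, A', X} : Set Pt) := by
  obtain ⟨s, hsAb, hsAc, hsBa, hsBc, hsCa, hsCb⟩ := hconc
  -- A ≠ P since P is interior to the triangle, hence inside the circle, while A is on it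
  have hsub : convexHull ℝ ({A, B, C} : Set Pt) ⊆ Metric.closedBall ω.center ω.radius := by
    apply convexHull_min ?_ (convex_closedBall _ _)
    intro x hx
    simp only [Set.mem_insert_iff, Set.mem_singleton_iff] at hx
    rcases hx with rfl | rfl | rfl <;>
      simp [Metric.mem_closedBall, (EuclideanGeometry.mem_sphere.1 ‹_›).le]
  have hPball : P ∈ Metric.ball ω.center ω.radius := by
    have h1 := interior_mono hsub hP
    rwa [interior_closedBall _ hr.ne'] at h1
  have hAP : A ≠ P := by
    rintro rfl
    have h1 : dist A ω.center < ω.radius := Metric.mem_ball.1 hPball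
    rw [EuclideanGeometry.mem_sphere.1 hA] at h1
    exact lt_irrefl _ h1
  -- part 1
  have hcolB : Collinear ℝ ({A, B_c, B_a} : Set Pt) :=
    collinear_triple_of_mem_affineSpan_pair (right_mem_affineSpan_pair ℝ C A) hB_cl hB_al
  have hcolC : Collinear ℝ ({A, C_a, C_b} : Set Pt) :=
    collinear_triple_of_mem_affineSpan_pair (left_mem_affineSpan_pair ℝ A B) hC_al hC_bl
  have e1 := pow_eq_inner ω₂ A B_c B_a hB_cc hB_ac hB_cB_a hcolB
  have e2 := pow_eq_inner s A B_c B_a hsBc hsBa hB_cB_a hcolB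
  have e3 := pow_eq_inner s A C_a C_b hsCa hsCb hC_aC_b hcolC
  have e4 := pow_eq_inner ω₃ A C_a C_b hC_ac hC_bc hC_aC_b hcolC
  have part1 : circlePower A ω₂ = circlePower A ω₃ := by rw [e1, ← e2, e3, ← e4]
  -- centers distinct
  have hcc : ω₂.center ≠ ω₃.center := by
    intro h
    apply hne
    have h2 := EuclideanGeometry.mem_sphere.1 hω₂2
    have h3 := EuclideanGeometry.mem_sphere.1 hω₃2
    have hrad : ω₂.radius = ω₃.radius := by rw [← h2, ← h3, h]
    exact EuclideanGeometry.Sphere.ext h hrad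
  set n : Pt := ω₃.center - ω₂.center with hn_def
  have hn : n ≠ 0 := sub_ne_zero.2 hcc.symm
  -- membership characterization
  have hmem : ∀ p : Pt, circlePower p ω₂ = circlePower p ω₃ ↔ ⟪p - A, n⟫ = 0 := by
    intro p
    have hd := pow_diff ω₂ ω₃ p A
    rw [part1, sub_self] at hd
    constructor
    · intro h
      rw [h, sub_self, sub_zero] at hd
      linarith
    · intro h
      rw [h, mul_zero, sub_zero, sub_eq_zero] at hd
      exact hd
  set v : Pt := P - A with hv_def
  have hv : v ≠ 0 := sub_ne_zero.2 hAP.symm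
  have hPA_perp : ⟪v, n⟫ = 0 := (hmem P).1 (by rw [mem_sphere_pow hω₂2, mem_sphere_pow hω₃2])
  -- span equality
  have hle : (ℝ ∙ v) ≤ (ℝ ∙ n)ᗮ := by
    rw [Submodule.span_singleton_le_iff_mem, Submodule.mem_orthogonal_singleton_iff_inner_right]
    rw [real_inner_comm]
    exact hPA_perp
  have h1 : Module.finrank ℝ (ℝ ∙ v) = 1 := finrank_span_singleton hv
  have h2 : Module.finrank ℝ ((ℝ ∙ n)ᗮ : Submodule ℝ Pt) = 1 := by
    have ho := Submodule.finrank_add_finrank_orthogonal (K := (ℝ ∙ n : Submodule ℝ Pt))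
    rw [finrank_span_singleton hn] at ho
    have htot : Module.finrank ℝ Pt = 2 := finrank_euclideanSpace_fin
    omega
  have hspan : (ℝ ∙ v) = (ℝ ∙ n)ᗮ :=
    Submodule.eq_of_le_of_finrank_eq hle (h1.trans h2.symm)
  -- line membership characterization
  have keyline : ∀ w : Pt, w +ᵥ A ∈ affineSpan ℝ ({A, P} : Set Pt) ↔ ∃ r : ℝ, r • v = w := by
    intro w
    rw [vadd_left_mem_affineSpan_pair]
    simp only [vsub_eq_sub, hv_def]
  have part2 : {p : Pt | circlePower p ω₂ = circlePower p ω₃}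
      = (affineSpan ℝ ({A, P} : Set Pt) : Set Pt) := by
    ext p
    simp only [Set.mem_setOf_eq, SetLike.mem_coe]
    rw [hmem p]
    have hpA : (p - A) +ᵥ A = p := by simp [vadd_eq_add]
    constructor
    · intro h
      have hmem2 : p - A ∈ (ℝ ∙ n)ᗮ := by
        rw [Submodule.mem_orthogonal_singleton_iff_inner_right, real_inner_comm]
        exact h
      rw [← hspan, Submodule.mem_span_singleton] at hmem2
      obtain ⟨t, ht⟩ := hmem2
      rw [← hpA]
      exact (keyline (p - A)).2 ⟨t, ht⟩
    · intro h
      rw [← hpA] at h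
      obtain ⟨r, hr⟩ := (keyline (p - A)).1 h
      rw [← hr, real_inner_smul_left, hPA_perp, mul_zero]
  refine ⟨part1, part2, ?_⟩
  -- part 3
  have hA'mem : A' ∈ affineSpan ℝ ({A, P} : Set Pt) :=
    hA'col.mem_affineSpan_of_mem_of_ne (by simp) (by simp) (by simp) hAP
  have hB'c : B' ≠ ω.center := by
    intro h
    have h0 := EuclideanGeometry.mem_sphere.1 hB'w
    rw [h, dist_self] at h0
    exact hr.ne h0
  have hC'c : C' ≠ ω.center := by
    intro h
    have h0 := EuclideanGeometry.mem_sphere.1 hC'w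
    rw [h, dist_self] at h0
    exact hr.ne h0
  have p2X : circlePower X ω₂ = ‖X - B'‖ ^ 2 :=
    pow_tangent ω₂ B' X hω₂1 (tangent_perp ω₂ ω B' X hω₂t hB'c hXB')
  have pwX2 : circlePower X ω = ‖X - B'‖ ^ 2 := pow_tangent ω B' X hB'w hXB'
  have pwX3 : circlePower X ω = ‖X - C'‖ ^ 2 := pow_tangent ω C' X hC'w hXC'
  have p3X : circlePower X ω₃ = ‖X - C'‖ ^ 2 :=
    pow_tangent ω₃ C' X hω₃1 (tangent_perp ω₃ ω C' X hω₃t hC'c hXC')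
  have hXmem : X ∈ affineSpan ℝ ({A, P} : Set Pt) := by
    have : circlePower X ω₂ = circlePower X ω₃ := by rw [p2X, p3X, ← pwX2, ← pwX3]
    have hset : X ∈ {p : Pt | circlePower p ω₂ = circlePower p ω₃} := this
    rw [part2] at hset
    exact hset
  have hcol4 : Collinear ℝ ({A', X, A, P} : Set Pt) :=
    collinear_insert_insert_of_mem_affineSpan_pair hA'mem hXmem
  apply hcol4.subset
  intro x hx
  simp only [Set.mem_insert_iff, Set.mem_singleton_iff] at hx ⊢
  tauto
end
end

section
/- (Tucker circle) The six vertices of a Tucker hexagon lie on a single circle. That is, if B_a C_a A_c B_c C_b A_b is a hexagon inscribed in triangle ABC with B_a, A_b on line AB, C_a, A_c on line CA, C_b, B_c on line BC, such that B_a C_a is antiparallel to BC, C_a C_b is parallel to AB, C_b A_b is antiparallel to CA, A_b A_c is parallel to BC, and A_c B_c is antiparallel to AB (then automatically B_c B_a is parallel to CA), then the six points are concyclic. -/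
open EuclideanGeometry RealInnerProductSpace

noncomputable section

noncomputable def Nform (R2 p q r : ℝ) (α lam : ℝ) : ℝ :=
  R2 + 2*α*(r-R2) + 2*lam*(q-R2) + α^2*(2*R2-2*r) + 2*α*lam*(R2+p-q-r) + lam^2*(2*R2-2*q)



lemma tucker_key (R2 p q r β β' γ δ' s w : ℝ)
    (E1 : (1-γ)*(q-R2) - β*(r-R2) = 0)
    (E3 : (β'-γ)*(R2-r) - (1-γ)*(p-r) = 0)
    (E5 : (1-δ')*(p-q) + (δ'-β')*(R2-q) = 0)
    (hs : s*(2*R2-2*r) + w*(R2+p-q-r) = (β+β'-1)*(R2-r))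
    (hw : s*(R2+p-q-r) + w*(2*R2-2*q) = (β'-γ)*(R2-q)) :
    Nform R2 p q r (β'-s) (0-w) = Nform R2 p q r (β-s) (0-w) ∧
    Nform R2 p q r (0-s) ((1-γ)-w) = Nform R2 p q r (β-s) (0-w) ∧
    Nform R2 p q r (0-s) (β'-w) = Nform R2 p q r (β-s) (0-w) ∧
    Nform R2 p q r (γ-s) ((1-γ)-w) = Nform R2 p q r (β-s) (0-w) ∧
    Nform R2 p q r ((1-δ')-s) (δ'-w) = Nform R2 p q r (β-s) (0-w) := by
  unfold Nform
  refine ⟨?_, ?_, ?_, ?_, ?_⟩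
  · linear_combination (-2*(β'-β))*hs
  · linear_combination 2*β'*E1 + 2*β*hs - 2*(1-γ)*hw
  · linear_combination 2*β'*E1 + 2*β*hs - 2*β'*hw
  · linear_combination (2*β'-2*γ)*E1 - 2*γ*E3 - 2*(γ-β)*hs - 2*(1-γ)*hw
  · linear_combination (-2*(1-δ'-β'))*E1 - 2*(1-δ')*E3 - 2*(1-γ-δ')*E5 - 2*(1-δ'-β)*hs - 2*δ'*hw

lemma norm_expand (a u v : Pt) (α lam : ℝ) :
    ‖a + α•u + lam•v‖^2 = ⟪a,a⟫ + 2*α*⟪a,u⟫ + 2*lam*⟪a,v⟫ + α^2*⟪u,u⟫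
      + 2*α*lam*⟪u,v⟫ + lam^2*⟪v,v⟫ := by
  rw [← real_inner_self_eq_norm_sq]
  simp only [inner_add_left, inner_add_right, real_inner_smul_left, real_inner_smul_right,
    real_inner_comm u a, real_inner_comm v a, real_inner_comm v u]
  ring

lemma line_param {X P Q : Pt} (h : X ∈ affineSpan ℝ ({P, Q} : Set Pt)) :
    ∃ t : ℝ, X = t • (Q - P) + P := by
  have h' : (X -ᵥ P) +ᵥ P ∈ affineSpan ℝ ({P, Q} : Set Pt) := by
    rwa [vsub_vadd]
  obtain ⟨t, ht⟩ := vadd_left_mem_affineSpan_pair.mp h'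
  rw [vsub_eq_sub] at ht
  exact ⟨t, eq_add_of_sub_eq ht.symm⟩

theorem stmt18    (A B C : Pt) (hABC : AffineIndependent ℝ ![A, B, C])
    (ω : EuclideanGeometry.Sphere Pt) (hr : 0 < ω.radius)
    (hA : A ∈ ω) (hB : B ∈ ω) (hC : C ∈ ω)
    (B_a C_a A_c B_c C_b A_b : Pt)
    (hBa : B_a ∈ affineSpan ℝ ({A, B} : Set Pt)) (hAb : A_b ∈ affineSpan ℝ ({A, B} : Set Pt))
    (hCa : C_a ∈ affineSpan ℝ ({C, A} : Set Pt)) (hAc : A_c ∈ affineSpan ℝ ({C, A} : Set Pt))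
    (hCb : C_b ∈ affineSpan ℝ ({B, C} : Set Pt)) (hBc : B_c ∈ affineSpan ℝ ({B, C} : Set Pt))
    (h1 : ⟪C_a - B_a, A - ω.center⟫ = 0)
    (h2 : ∃ t : ℝ, C_b - C_a = t • (B - A))
    (h3 : ⟪A_b - C_b, B - ω.center⟫ = 0)
    (h4 : ∃ t : ℝ, A_c - A_b = t • (C - B))
    (h5 : ⟪B_c - A_c, C - ω.center⟫ = 0) :
    ∃ s : EuclideanGeometry.Sphere Pt,
      B_a ∈ s ∧ C_a ∈ s ∧ A_c ∈ s ∧ B_c ∈ s ∧ C_b ∈ s ∧ A_b ∈ s := by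
  set O := ω.center with hO
  -- parametrize
  obtain ⟨β, hBaeq⟩ := line_param hBa
  obtain ⟨β', hAbeq⟩ := line_param hAb
  obtain ⟨γ, hCaeq⟩ := line_param hCa
  obtain ⟨γ', hAceq⟩ := line_param hAc
  obtain ⟨δ, hCbeq⟩ := line_param hCb
  obtain ⟨δ', hBceq⟩ := line_param hBc
  -- basic scalars
  set R2 : ℝ := ω.radius ^ 2 with hR2
  set va : Pt := A - O with hva
  set vb : Pt := B - O with hvb
  set vc : Pt := C - O with hvc
  set p : ℝ := ⟪vb, vc⟫ with hp
  set q : ℝ := ⟪vc, va⟫ with hq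
  set r : ℝ := ⟪va, vb⟫ with hrr
  have haa : ⟪va, va⟫ = R2 := by
    rw [real_inner_self_eq_norm_sq, ← dist_eq_norm]
    rw [hR2, (EuclideanGeometry.mem_sphere.mp hA : dist A O = ω.radius)]
  have hbb : ⟪vb, vb⟫ = R2 := by
    rw [real_inner_self_eq_norm_sq, ← dist_eq_norm]
    rw [hR2, (EuclideanGeometry.mem_sphere.mp hB : dist B O = ω.radius)]
  have hcc : ⟪vc, vc⟫ = R2 := by
    rw [real_inner_self_eq_norm_sq, ← dist_eq_norm]
    rw [hR2, (EuclideanGeometry.mem_sphere.mp hC : dist C O = ω.radius)]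
  -- inner products of the basis u := B-A, v := C-A with things
  have hsplitU : B - A = vb - va := by rw [hva, hvb]; abel
  have hsplitV : C - A = vc - va := by rw [hva, hvc]; abel
  have hau : ⟪va, B - A⟫ = r - R2 := by
    rw [hsplitU, inner_sub_right, haa, hrr]
  have hav : ⟪va, C - A⟫ = q - R2 := by
    rw [hsplitV, inner_sub_right, haa, real_inner_comm vc va, ← hq]
  have huu : ⟪B - A, B - A⟫ = 2*R2 - 2*r := by
    rw [hsplitU]
    simp only [inner_sub_left, inner_sub_right]
    rw [haa, hbb, real_inner_comm va vb, ← hrr]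
    ring
  have hvv : ⟪C - A, C - A⟫ = 2*R2 - 2*q := by
    rw [hsplitV]
    simp only [inner_sub_left, inner_sub_right]
    rw [haa, hcc, real_inner_comm vc va, ← hq]
    ring
  have huv : ⟪B - A, C - A⟫ = R2 + p - q - r := by
    rw [hsplitU, hsplitV]
    simp only [inner_sub_left, inner_sub_right]
    rw [haa, real_inner_comm vc va, real_inner_comm va vb, ← hp, ← hq, ← hrr]
    ring
  -- linear independence of B-A, C-A
  have hncol : ¬Collinear ℝ ({A, B, C} : Set Pt) :=
    affineIndependent_iff_not_collinear_set.mp hABC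
  have hli : ∀ s t : ℝ, s • (B-A) + t • (C-A) = 0 → s = 0 ∧ t = 0 := by
    intro s t h
    by_contra hc
    apply hncol
    rcases eq_or_ne t 0 with ht | ht
    · subst ht
      have hs0 : s ≠ 0 := fun h0 => hc ⟨h0, rfl⟩
      have hBA : B = A := by
        have h0 : s • (B - A) = 0 := by simpa using h
        rcases smul_eq_zero.mp h0 with h' | h'
        · exact absurd h' hs0
        · exact sub_eq_zero.mp h'
      rw [hBA, Set.insert_comm, Set.insert_idem]
      exact collinear_pair ℝ A C
    · rw [collinear_iff_of_mem (Set.mem_insert A {B, C})]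
      refine ⟨B - A, fun x hx => ?_⟩
      simp only [Set.mem_insert_iff, Set.mem_singleton_iff] at hx
      rcases hx with rfl | rfl | rfl
      · exact ⟨0, by simp⟩
      · exact ⟨1, by rw [one_smul, vadd_eq_add]; abel⟩
      · refine ⟨-s/t, ?_⟩
        have hre : t • (x - A) = (-s) • (B - A) := by
          rw [neg_smul]
          exact eq_neg_of_add_eq_zero_right h
        have hco : (-s/t) • (B - A) = x - A := by
          rw [show (-s/t : ℝ) = t⁻¹ * (-s) by field_simp, mul_smul, ← hre, smul_smul,
            inv_mul_cancel₀ ht, one_smul]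
        rw [vadd_eq_add, hco]; abel
  have hu0 : (B : Pt) - A ≠ 0 := by
    intro h0
    have := (hli 1 0 (by simp [h0])).1
    norm_num at this
  have hlt1 : ⟪B-A, C-A⟫ < ‖B-A‖ * ‖C-A‖ := by
    apply inner_lt_norm_mul_iff_real.mpr
    intro heq
    have h0 := hli ‖C-A‖ (-‖B-A‖)
      (by rw [neg_smul, ← sub_eq_add_neg]; exact sub_eq_zero_of_eq heq)
    exact hu0 (norm_eq_zero.mp (by linarith [h0.2, norm_nonneg ((B:Pt)-A)] : ‖(B:Pt)-A‖ = 0))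
  have hlt2 : -⟪B-A, C-A⟫ < ‖B-A‖ * ‖C-A‖ := by
    have h' : ⟪B-A, -(C-A)⟫ < ‖B-A‖ * ‖-(C-A)‖ := by
      apply inner_lt_norm_mul_iff_real.mpr
      intro heq
      rw [norm_neg, smul_neg] at heq
      have h0 := hli ‖C-A‖ ‖B-A‖
        (by rw [heq]; abel)
      exact hu0 (norm_eq_zero.mp (by linarith [h0.2] : ‖(B:Pt)-A‖ = 0))
    rwa [inner_neg_right, norm_neg] at h'
  have hgram : ⟪B-A, C-A⟫^2 < ⟪B-A, B-A⟫ * ⟪C-A, C-A⟫ := by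
    have h2 : ⟪B-A, C-A⟫^2 < (‖B-A‖*‖C-A‖)^2 := sq_lt_sq' (by linarith) hlt1
    rwa [mul_pow, ← real_inner_self_eq_norm_sq, ← real_inner_self_eq_norm_sq] at h2
  have hD : (0:ℝ) < (2*R2-2*r)*(2*R2-2*q) - (R2+p-q-r)^2 := by
    rw [huu, hvv, huv] at hgram
    linarith
  -- extract parallelism coefficients
  obtain ⟨t2, ht2⟩ := h2
  have hvec2 : (1-δ-t2) • (B-A) + (γ-1+δ) • (C-A) = 0 := by
    have hcur : (1-δ-t2) • (B-A) + (γ-1+δ) • (C-A)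
        = ((δ • (C - B) + B) - (γ • (A - C) + C)) - t2 • (B - A) := by module
    rw [← hCbeq, ← hCaeq, ht2, sub_self] at hcur
    exact hcur
  have hδ : δ = 1 - γ := by
    have := (hli _ _ hvec2).2; linarith
  obtain ⟨t4, ht4⟩ := h4
  have hvec4 : (t4 - β') • (B-A) + (1-γ'-t4) • (C-A) = 0 := by
    have hcur : (t4-β') • (B-A) + (1-γ'-t4) • (C-A)
        = ((γ' • (A - C) + C) - (β' • (B-A) + A)) - t4 • (C - B) := by module
    rw [← hAceq, ← hAbeq, ht4, sub_self] at hcur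
    exact hcur
  have hγ' : γ' = 1 - β' := by
    have ha' := (hli _ _ hvec4).1
    have hb' := (hli _ _ hvec4).2
    linarith
  -- scalar equations from antiparallel conditions
  have E1 : (1-γ)*(q-R2) - β*(r-R2) = 0 := by
    have hd : C_a - B_a = (1-γ) • (C-A) - β • (B-A) := by rw [hCaeq, hBaeq]; module
    rw [hd, inner_sub_left, real_inner_smul_left, real_inner_smul_left,
      real_inner_comm va (C-A), real_inner_comm va (B-A), hav, hau] at h1
    linarith
  have hbu : ⟪vb, B - A⟫ = R2 - r := by
    rw [hsplitU, inner_sub_right, hbb, real_inner_comm va vb, ← hrr]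
  have hbv : ⟪vb, C - A⟫ = p - r := by
    rw [hsplitV, inner_sub_right, ← hp, real_inner_comm va vb, ← hrr]
  have E3 : (β'-γ)*(R2-r) - (1-γ)*(p-r) = 0 := by
    have hd : A_b - C_b = (β'-γ) • (B-A) - (1-γ) • (C-A) := by
      rw [hAbeq, hCbeq, hδ]; module
    rw [hd, inner_sub_left, real_inner_smul_left, real_inner_smul_left,
      real_inner_comm vb (B-A), real_inner_comm vb (C-A), hbu, hbv] at h3
    linarith
  have hcu : ⟪vc, B - A⟫ = p - q := by
    rw [hsplitU, inner_sub_right, real_inner_comm vb vc, ← hp, ← hq]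
  have hcv : ⟪vc, C - A⟫ = R2 - q := by
    rw [hsplitV, inner_sub_right, hcc, ← hq]
  have E5 : (1-δ')*(p-q) + (δ'-β')*(R2-q) = 0 := by
    have hd : B_c - A_c = (1-δ') • (B-A) + (δ'-β') • (C-A) := by
      rw [hBceq, hAceq, hγ']; module
    rw [hd, inner_add_left, real_inner_smul_left, real_inner_smul_left,
      real_inner_comm vc (B-A), real_inner_comm vc (C-A), hcu, hcv] at h5
    linarith
  -- construct the center
  have hDne : (2*R2-2*r)*(2*R2-2*q) - (R2+p-q-r)^2 ≠ 0 := ne_of_gt hD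
  set D1 : ℝ := (β+β'-1)*(R2-r) with hD1
  set D2 : ℝ := (β'-γ)*(R2-q) with hD2
  set sc : ℝ := (D1*(2*R2-2*q) - D2*(R2+p-q-r))/((2*R2-2*r)*(2*R2-2*q) - (R2+p-q-r)^2) with hsc
  set wc : ℝ := (D2*(2*R2-2*r) - D1*(R2+p-q-r))/((2*R2-2*r)*(2*R2-2*q) - (R2+p-q-r)^2) with hwc
  have hs : sc*(2*R2-2*r) + wc*(R2+p-q-r) = (β+β'-1)*(R2-r) := by
    rw [hsc, hwc, hD1, hD2]
    rw [div_mul_eq_mul_div, div_mul_eq_mul_div, ← add_div, div_eq_iff hDne]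
    ring
  have hw : sc*(R2+p-q-r) + wc*(2*R2-2*q) = (β'-γ)*(R2-q) := by
    rw [hsc, hwc, hD1, hD2]
    rw [div_mul_eq_mul_div, div_mul_eq_mul_div, ← add_div, div_eq_iff hDne]
    ring
  set PC : Pt := sc • (B-A) + wc • (C-A) + O with hPC
  have hNf : ∀ α lam : ℝ, ‖va + α•(B-A) + lam•(C-A)‖^2 = Nform R2 p q r α lam := by
    intro α lam
    rw [norm_expand, haa, hau, hav, huu, huv, hvv]
    unfold Nform
    ring
  have hdist : ∀ (X : Pt) (αx lx : ℝ), X - PC = va + (αx-sc)•(B-A) + (lx-wc)•(C-A) →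
      dist X PC ^ 2 = Nform R2 p q r (αx-sc) (lx-wc) := by
    intro X αx lx hX
    rw [dist_eq_norm, hX, hNf]
  obtain ⟨k1, k2, k3, k4, k5⟩ := tucker_key R2 p q r β β' γ δ' sc wc E1 E3 E5 hs hw
  have dBa : dist B_a PC ^ 2 = Nform R2 p q r (β-sc) (0-wc) := by
    apply hdist
    rw [hBaeq, hPC, hva]; module
  have dAb : dist A_b PC ^ 2 = Nform R2 p q r (β'-sc) (0-wc) := by
    apply hdist
    rw [hAbeq, hPC, hva]; module
  have dCa : dist C_a PC ^ 2 = Nform R2 p q r (0-sc) ((1-γ)-wc) := by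
    apply hdist
    rw [hCaeq, hPC, hva]; module
  have dAc : dist A_c PC ^ 2 = Nform R2 p q r (0-sc) (β'-wc) := by
    apply hdist
    rw [hAceq, hγ', hPC, hva]; module
  have dCb : dist C_b PC ^ 2 = Nform R2 p q r (γ-sc) ((1-γ)-wc) := by
    apply hdist
    rw [hCbeq, hδ, hPC, hva]; module
  have dBc : dist B_c PC ^ 2 = Nform R2 p q r ((1-δ')-sc) (δ'-wc) := by
    apply hdist
    rw [hBceq, hPC, hva]; module
  have final : ∀ X : Pt, dist X PC ^ 2 = dist B_a PC ^ 2 → dist X PC = dist B_a PC := by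
    intro X h
    rw [← Real.sqrt_sq (dist_nonneg (x := X) (y := PC)), h,
      Real.sqrt_sq (dist_nonneg (x := B_a) (y := PC))]
  refine ⟨⟨PC, dist B_a PC⟩, EuclideanGeometry.mem_sphere.mpr rfl, ?_, ?_, ?_, ?_, ?_⟩ <;>
    apply EuclideanGeometry.mem_sphere.mpr <;> apply final
  · rw [dCa, dBa, k2]
  · rw [dAc, dBa, k3]
  · rw [dBc, dBa, k5]
  · rw [dCb, dBa, k4]
  · rw [dAb, dBa, k1]
end
end
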